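/- arXiv:1308.4192 — 13 statements merged into one kernel-verified Lean document; each statement's English description precedes it below -/
import Mathlib

section
/- For all integers n ≥ 1 and 0 ≤ l ≤ (n-2)/2, the incomplete h-Fibonacci polynomials satisfy F_{h,n+2}^{l+1}(x) = h(x)·F_{h,n+1}^{l+1}(x) + F_{h,n}^{l}(x). -/
open Finset

/-- Incomplete h-Fibonacci polynomials: F_{h,n}^l = ∑_{i=0}^l C(n-1-i,i) h^(n-1-2i). -/
noncomputable def incF (h : ℝ) (n l : ℕ) : ℝ :=
  ∑ i ∈ Finset.range (l + 1), (Nat.choose (n - 1 - i) i : ℝ) * h ^ (n - 1 - 2 * i)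

/-- Incomplete h-Lucas polynomials: L_{h,n}^l = ∑_{i=0}^l (n/(n-i)) C(n-i,i) h^(n-2i). -/
noncomputable def incL (h : ℝ) (n l : ℕ) : ℝ :=
  ∑ i ∈ Finset.range (l + 1), ((n : ℝ) / ((n - i : ℕ) : ℝ)) * (Nat.choose (n - i) i : ℝ) * h ^ (n - 2 * i)

/-- h-Fibonacci sequence. -/
noncomputable def Fh (h : ℝ) : ℕ → ℝ
  | 0 => 0
  | 1 => 1
  | n + 2 => h * Fh h (n + 1) + Fh h n

/-- h-Lucas sequence. -/
noncomputable def Lh (h : ℝ) : ℕ → ℝ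
  | 0 => 2
  | 1 => h
  | n + 2 => h * Lh h (n + 1) + Lh h n

theorem incF_recurrence (h : ℝ) (n l : ℕ) (hn : 1 ≤ n) (hl : l ≤ (n - 2) / 2) :
    incF h (n + 2) (l + 1) = h * incF h (n + 1) (l + 1) + incF h n l := by
  rcases eq_or_lt_of_le hn with h1 | h2
  · have hl0 : l = 0 := by omega
    subst hl0
    simp [← h1, incF, Finset.sum_range_succ]
    ring
  · have hln : 2 * l + 2 ≤ n := by omega
    unfold incF
    rw [Finset.sum_range_succ' (fun i => ((Nat.choose (n + 2 - 1 - i) i : ℕ) : ℝ) * h ^ (n + 2 - 1 - 2 * i)) (l+1),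
        Finset.sum_range_succ' (fun i => ((Nat.choose (n + 1 - 1 - i) i : ℕ) : ℝ) * h ^ (n + 1 - 1 - 2 * i)) (l+1),
        mul_add, Finset.mul_sum]
    have key : ∀ i ∈ Finset.range (l+1),
        ((Nat.choose (n + 2 - 1 - (i+1)) (i+1) : ℕ) : ℝ) * h ^ (n + 2 - 1 - 2 * (i+1))
        = h * (((Nat.choose (n + 1 - 1 - (i+1)) (i+1) : ℕ) : ℝ) * h ^ (n + 1 - 1 - 2 * (i+1)))
          + ((Nat.choose (n - 1 - i) i : ℕ) : ℝ) * h ^ (n - 1 - 2 * i) := by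
      intro i hi
      have hi' : i ≤ l := Nat.lt_succ_iff.mp (Finset.mem_range.mp hi)
      rw [show n + 2 - 1 - (i+1) = (n - 1 - i) + 1 from by omega, Nat.choose_succ_succ,
          show n + 2 - 1 - 2 * (i+1) = n - 1 - 2 * i from by omega,
          show n + 1 - 1 - (i+1) = n - 1 - i from by omega,
          show n - 1 - 2 * i = (n + 1 - 1 - 2 * (i+1)) + 1 from by omega, pow_succ]
      push_cast
      ring
    rw [Finset.sum_congr rfl key, Finset.sum_add_distrib]
    simp [pow_succ]
    ring
end

section
/- For all n ≥ 1 and 0 ≤ l ≤ ⌊(n-1)/2⌋, the incomplete h-Fibonacci polynomials satisfy the non-homogeneous recurrence F_{h,n+2}^{l}(x) = h(x)·F_{h,n+1}^{l}(x) + F_{h,n}^{l}(x) − C(n-1-l, l)·h(x)^{n-1-2l}, valid whenever all terms are defined (i.e., l ≤ ⌊(n-1)/2⌋). -/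
open Finset

lemma incF_succ (h : ℝ) (m l : ℕ) :
    incF h m (l + 1) = incF h m l +
      (Nat.choose (m - 1 - (l + 1)) (l + 1) : ℝ) * h ^ (m - 1 - 2 * (l + 1)) := by
  simp [incF, Finset.sum_range_succ]

theorem incF_nonhomogeneous_recurrence (h : ℝ) (n l : ℕ) (hn : 1 ≤ n) (hl : l ≤ (n - 1) / 2) :
    incF h (n + 2) l =
      h * incF h (n + 1) l + incF h n l - (Nat.choose (n - 1 - l) l : ℝ) * h ^ (n - 1 - 2 * l) := by
  induction l with
  | zero =>
    obtain ⟨k, rfl⟩ : ∃ k, n = k + 1 := ⟨n - 1, by omega⟩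
    simp [incF]
    rw [show k + 2 = (k + 1) + 1 by omega, pow_succ]
    ring
  | succ l ih =>
    have hn' : 2 * l + 3 ≤ n := by
      have := (Nat.le_div_iff_mul_le (by norm_num : 0 < 2)).mp hl
      omega
    obtain ⟨k, rfl⟩ : ∃ k, n = k + (2 * l + 3) := ⟨n - (2 * l + 3), by omega⟩
    have ih' := ih (by
      have : l * 2 ≤ k + (2 * l + 3) - 1 := by omega
      exact (Nat.le_div_iff_mul_le (by norm_num : 0 < 2)).mpr this)
    rw [incF_succ, incF_succ, incF_succ, ih']
    rw [show k + (2 * l + 3) + 2 - 1 - (l + 1) = (k + l + 2) + 1 by omega,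
      show k + (2 * l + 3) + 1 - 1 - (l + 1) = k + l + 2 by omega,
      show k + (2 * l + 3) - 1 - (l + 1) = k + l + 1 by omega,
      show k + (2 * l + 3) - 1 - l = k + l + 2 by omega,
      show k + (2 * l + 3) + 2 - 1 - 2 * (l + 1) = k + 2 by omega,
      show k + (2 * l + 3) + 1 - 1 - 2 * (l + 1) = k + 1 by omega,
      show k + (2 * l + 3) - 1 - 2 * (l + 1) = k by omega,
      show k + (2 * l + 3) - 1 - 2 * l = k + 2 by omega]
    rw [Nat.choose_succ_succ (k + l + 2) l]
    push_cast
    rw [show (k + 2 : ℕ) = (k + 1) + 1 by omega, pow_succ]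
    ring
end

section
/- For all s ≥ 0, n ≥ 1, and 0 ≤ l ≤ (n-s-1)/2, we have ∑_{i=0}^{s} C(s,i) · F_{h,n+i}^{l+i}(x) · h(x)^i = F_{h,n+2s}^{l+s}(x). -/
open Finset

/-- The basic recurrence for incomplete h-Fibonacci polynomials, valid for all `l`
(terms outside the natural range have vanishing binomial coefficients). -/
lemma incF_rec (h : ℝ) (n l : ℕ) (hn : 1 ≤ n) :
    incF h (n + 2) (l + 1) = h * incF h (n + 1) (l + 1) + incF h n l := by
  unfold incF
  rw [Finset.sum_range_succ'
        (fun i => (Nat.choose (n + 2 - 1 - i) i : ℝ) * h ^ (n + 2 - 1 - 2 * i)),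
      Finset.sum_range_succ'
        (fun i => (Nat.choose (n + 1 - 1 - i) i : ℝ) * h ^ (n + 1 - 1 - 2 * i)),
      mul_add, Finset.mul_sum]
  have key : ∀ i ∈ Finset.range (l + 1),
      (Nat.choose (n + 2 - 1 - (i + 1)) (i + 1) : ℝ) * h ^ (n + 2 - 1 - 2 * (i + 1)) =
      h * ((Nat.choose (n + 1 - 1 - (i + 1)) (i + 1) : ℝ) * h ^ (n + 1 - 1 - 2 * (i + 1)))
        + (Nat.choose (n - 1 - i) i : ℝ) * h ^ (n - 1 - 2 * i) := by
    intro i _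
    by_cases hni : n ≤ i
    · have e1 : n + 2 - 1 - (i + 1) = 0 := by omega
      have e2 : n + 1 - 1 - (i + 1) = 0 := by omega
      have e3 : n - 1 - i = 0 := by omega
      rw [e1, e2, e3]
      simp [Nat.choose_eq_zero_of_lt (show (0:ℕ) < i + 1 by omega),
            Nat.choose_eq_zero_of_lt (show (0:ℕ) < i by omega)]
    · push_neg at hni
      have e1 : n + 2 - 1 - (i + 1) = (n - 1 - i) + 1 := by omega
      have e2 : n + 1 - 1 - (i + 1) = n - 1 - i := by omega
      have e3 : n + 2 - 1 - 2 * (i + 1) = n - 1 - 2 * i := by omega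
      rw [e1, e2, e3, Nat.choose_succ_succ]
      by_cases h2 : 2 * i + 2 ≤ n
      · have e4 : n + 1 - 1 - 2 * (i + 1) + 1 = n - 1 - 2 * i := by omega
        rw [← e4, pow_succ]
        push_cast
        ring
      · rw [Nat.choose_eq_zero_of_lt (show n - 1 - i < i + 1 by omega)]
        push_cast
        ring
  rw [Finset.sum_congr rfl key, Finset.sum_add_distrib]
  simp [pow_succ]
  ring

/-- Splitting a binomially-weighted sum via Pascal's rule. -/
lemma binom_split (s : ℕ) (t : ℕ → ℝ) :
    ∑ i ∈ Finset.range (s + 2), (Nat.choose (s + 1) i : ℝ) * t i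
      = ∑ i ∈ Finset.range (s + 1), (Nat.choose s i : ℝ) * t i
        + ∑ i ∈ Finset.range (s + 1), (Nat.choose s i : ℝ) * t (i + 1) := by
  rw [Finset.sum_range_succ' (fun i => (Nat.choose (s + 1) i : ℝ) * t i)]
  have key : ∀ i ∈ Finset.range (s + 1), (Nat.choose (s + 1) (i + 1) : ℝ) * t (i + 1)
      = (Nat.choose s i : ℝ) * t (i + 1) + (Nat.choose s (i + 1) : ℝ) * t (i + 1) := by
    intro i _
    rw [Nat.choose_succ_succ]
    push_cast
    ring
  rw [Finset.sum_congr rfl key, Finset.sum_add_distrib,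
      Finset.sum_range_succ' (fun i => (Nat.choose s i : ℝ) * t i),
      Finset.sum_range_succ (fun i => (Nat.choose s (i + 1) : ℝ) * t (i + 1)),
      Nat.choose_eq_zero_of_lt (by omega : s < s + 1)]
  simp
  ring

lemma incF_binom_aux (h : ℝ) (s : ℕ) : ∀ n l : ℕ, 1 ≤ n →
    ∑ i ∈ Finset.range (s + 1), (Nat.choose s i : ℝ) * incF h (n + i) (l + i) * h ^ i =
      incF h (n + 2 * s) (l + s) := by
  induction s with
  | zero => intro n l _; simp
  | succ s ih =>
    intro n l hn
    have e := binom_split s (fun i => incF h (n + i) (l + i) * h ^ i)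
    simp only [← mul_assoc] at e
    rw [e, ih n l hn]
    have e2 : ∑ i ∈ Finset.range (s + 1),
        (Nat.choose s i : ℝ) * incF h (n + (i + 1)) (l + (i + 1)) * h ^ (i + 1)
        = h * ∑ i ∈ Finset.range (s + 1),
            (Nat.choose s i : ℝ) * incF h ((n + 1) + i) ((l + 1) + i) * h ^ i := by
      rw [Finset.mul_sum]
      refine Finset.sum_congr rfl fun i _ => ?_
      have : n + (i + 1) = (n + 1) + i := by omega
      have h2 : l + (i + 1) = (l + 1) + i := by omega
      rw [this, h2, pow_succ]
      ring
    rw [e2, ih (n + 1) (l + 1) (by omega)]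
    have e3 : n + 1 + 2 * s = n + 2 * s + 1 := by omega
    have e4 : n + 2 * (s + 1) = n + 2 * s + 2 := by omega
    have e5 : l + (s + 1) = l + s + 1 := by omega
    have e6 : l + 1 + s = l + s + 1 := by omega
    rw [e3, e4, e5, e6, incF_rec h (n + 2 * s) (l + s) (by omega)]
    ring

theorem incF_binomial_sum (h : ℝ) (s n l : ℕ) (hn : 1 ≤ n) (hl : l ≤ (n - s - 1) / 2) :
    ∑ i ∈ Finset.range (s + 1), (Nat.choose s i : ℝ) * incF h (n + i) (l + i) * h ^ i =
      incF h (n + 2 * s) (l + s) :=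
  incF_binom_aux h s n l hn
end

section
/- For n ≥ 2, L_{h,n}^{⌊(n-2)/2⌋}(x) = L_{h,n}(x) − 2 if n is even, and L_{h,n}^{⌊(n-2)/2⌋}(x) = L_{h,n}(x) − n·h(x) if n is odd. -/
open Finset

/-!
With `F_{n+1} = ∑ C(n-i,i) h^(n-2i)` and `L_{n+1} = F_{n+2} + F_n`, the identity
`n/(n-i) C(n-i,i) = C(n-i,i) + C(n-i-1,i-1)` matches the Lucas terms with pairs of Fibonacci
terms, giving the closed form `L_n = L_{h,n}^{⌊n/2⌋}`. Since `⌊(n-2)/2⌋ = ⌊n/2⌋ - 1`, the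
incomplete polynomial misses exactly the term `i = ⌊n/2⌋`, which is `2` for even `n` and
`n h` for odd `n`.
-/

namespace IncompleteLucas

variable (h : ℝ)

def fibTerm (n i : ℕ) : ℝ := ((n - i).choose i : ℝ) * h ^ (n - 2 * i)

noncomputable def lucasTerm (n i : ℕ) : ℝ :=
  ((n : ℝ) / ((n - i : ℕ) : ℝ)) * ((n - i).choose i : ℝ) * h ^ (n - 2 * i)

theorem incL_eq_sum_lucasTerm (n l : ℕ) :
    incL h n l = ∑ i ∈ range (l + 1), lucasTerm h n i := rfl

theorem choose_sub_eq_zero_of_lt_two_mul {n i : ℕ} (hi : n < 2 * i) : (n - i).choose i = 0 :=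
  Nat.choose_eq_zero_of_lt (by omega)

theorem fibTerm_eq_zero {n i : ℕ} (hi : n < 2 * i) : fibTerm h n i = 0 := by
  simp [fibTerm, choose_sub_eq_zero_of_lt_two_mul hi]

theorem lucasTerm_eq_zero {n i : ℕ} (hi : n < 2 * i) : lucasTerm h n i = 0 := by
  simp [lucasTerm, choose_sub_eq_zero_of_lt_two_mul hi]

theorem fibTerm_zero (n : ℕ) : fibTerm h n 0 = h ^ n := by
  simp [fibTerm]

theorem lucasTerm_zero {n : ℕ} (hn : n ≠ 0) : lucasTerm h n 0 = h ^ n := by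
  simp [lucasTerm, hn]

theorem fibTerm_add_two_succ (n i : ℕ) :
    fibTerm h (n + 2) (i + 1) = h * fibTerm h (n + 1) (i + 1) + fibTerm h n i := by
  rcases lt_or_ge n (2 * i) with hlt | hle
  · rw [fibTerm_eq_zero h (by omega : n + 2 < 2 * (i + 1)),
      fibTerm_eq_zero h (by omega : n + 1 < 2 * (i + 1)), fibTerm_eq_zero h hlt]
    ring
  obtain ⟨m, rfl⟩ : ∃ m, n = 2 * i + m := ⟨n - 2 * i, by omega⟩
  unfold fibTerm
  rw [show 2 * i + m + 2 - (i + 1) = (i + m) + 1 by omega,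
    show 2 * i + m + 1 - (i + 1) = i + m by omega, show 2 * i + m - i = i + m by omega,
    show 2 * i + m + 2 - 2 * (i + 1) = m by omega, show 2 * i + m - 2 * i = m by omega,
    Nat.choose_succ_succ']
  rcases m with _ | m
  · simp
  · rw [show 2 * i + (m + 1) + 1 - 2 * (i + 1) = m by omega]
    push_cast
    ring

theorem Fh_succ_eq_sum_fibTerm : ∀ n, Fh h (n + 1) = ∑ i ∈ range (n + 1), fibTerm h n i := by
  refine Nat.twoStepInduction (by simp [Fh, fibTerm]) (by simp [Fh, fibTerm, sum_range_succ])
    fun n ih₀ ih₁ => ?_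
  rw [show Fh h (n + 2 + 1) = h * Fh h (n + 2) + Fh h (n + 1) from rfl, ih₀, ih₁,
    sum_range_succ _ (n + 2), fibTerm_eq_zero h (by omega : n + 2 < 2 * (n + 2)), add_zero,
    sum_range_succ' _ (n + 1), sum_range_succ' _ (n + 1)]
  simp only [fibTerm_add_two_succ, fibTerm_zero, sum_add_distrib, mul_add, mul_sum]
  ring

theorem Lh_succ_eq_Fh_add_Fh : ∀ n, Lh h (n + 1) = Fh h (n + 2) + Fh h n :=
  Nat.twoStepInduction (by simp [Lh, Fh]) (by simp [Lh, Fh]; ring) fun n ih₀ ih₁ => by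
    rw [show Lh h (n + 2 + 1) = h * Lh h (n + 2) + Lh h (n + 1) from rfl, ih₀, ih₁]
    simp only [Fh]
    ring

theorem lucasTerm_add_two_succ (n i : ℕ) :
    lucasTerm h (n + 2) (i + 1) = fibTerm h (n + 2) (i + 1) + fibTerm h n i := by
  rcases lt_or_ge n (2 * i) with hlt | hle
  · rw [lucasTerm_eq_zero h (by omega), fibTerm_eq_zero h (by omega), fibTerm_eq_zero h hlt]
    ring
  obtain ⟨m, rfl⟩ : ∃ m, n = i + m := ⟨n - i, by omega⟩
  unfold lucasTerm fibTerm
  rw [show i + m + 2 - (i + 1) = m + 1 by omega, show i + m - i = m by omega,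
    show i + m + 2 - 2 * (i + 1) = i + m - 2 * i by omega]
  have hcoeff : ((i + m + 2 : ℕ) : ℝ) / ((m + 1 : ℕ) : ℝ) * ((m + 1).choose (i + 1) : ℝ)
      = ((m + 1).choose (i + 1) : ℝ) + (m.choose i : ℝ) := by
    have key : ((m + 1 : ℕ) : ℝ) * m.choose i = (m + 1).choose (i + 1) * (i + 1 : ℕ) := by
      exact_mod_cast Nat.add_one_mul_choose_eq m i
    rw [div_mul_eq_mul_div, div_eq_iff (by positivity)]
    push_cast at key ⊢
    linear_combination (-1 : ℝ) * key
  rw [hcoeff]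
  ring

theorem Lh_succ_eq_sum_lucasTerm :
    ∀ n, Lh h (n + 1) = ∑ i ∈ range (n + 2), lucasTerm h (n + 1) i
  | 0 => by simp [Lh, lucasTerm, sum_range_succ]
  | n + 1 => by
    rw [Lh_succ_eq_Fh_add_Fh, Fh_succ_eq_sum_fibTerm, Fh_succ_eq_sum_fibTerm,
      sum_range_succ' _ (n + 2), sum_range_succ' _ (n + 2)]
    simp only [lucasTerm_add_two_succ, sum_add_distrib, fibTerm_zero,
      lucasTerm_zero h (by omega : n + 1 + 1 ≠ 0)]
    rw [sum_range_succ (fibTerm h n) (n + 1), fibTerm_eq_zero h (by omega : n < 2 * (n + 1))]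
    ring

theorem Lh_eq_incL {n : ℕ} (hn : 1 ≤ n) : Lh h n = incL h n (n / 2) := by
  obtain ⟨n, rfl⟩ : ∃ m, n = m + 1 := ⟨n - 1, by omega⟩
  rw [Lh_succ_eq_sum_lucasTerm, incL_eq_sum_lucasTerm]
  refine (sum_subset (range_subset_range.2 (by omega)) fun i hi hi' => ?_).symm
  simp only [mem_range] at hi hi'
  exact lucasTerm_eq_zero h (by omega)

theorem lucasTerm_half_of_even {n : ℕ} (hn : Even n) (hn₀ : n ≠ 0) :
    lucasTerm h n (n / 2) = 2 := by
  obtain ⟨k, rfl⟩ := hn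
  have hk : (k : ℝ) ≠ 0 := by exact_mod_cast (by omega : k ≠ 0)
  rw [lucasTerm, show (k + k) / 2 = k by omega, show k + k - k = k by omega,
    show k + k - 2 * k = 0 by omega, Nat.choose_self]
  push_cast
  field_simp
  ring

theorem lucasTerm_half_of_odd {n : ℕ} (hn : Odd n) : lucasTerm h n (n / 2) = n * h := by
  obtain ⟨k, rfl⟩ := hn
  rw [lucasTerm, show (2 * k + 1) / 2 = k by omega, show 2 * k + 1 - k = k + 1 by omega,
    show 2 * k + 1 - 2 * k = 1 by omega, Nat.choose_succ_self_right]
  field_simp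

end IncompleteLucas

open IncompleteLucas in
theorem incL_penultimate (h : ℝ) (n : ℕ) (hn : 2 ≤ n) :
    (Even n → incL h n ((n - 2) / 2) = Lh h n - 2) ∧
    (Odd n → incL h n ((n - 2) / 2) = Lh h n - (n : ℝ) * h) := by
  have hsplit : Lh h n = incL h n ((n - 2) / 2) + lucasTerm h n (n / 2) := by
    rw [Lh_eq_incL h (by omega), incL_eq_sum_lucasTerm, incL_eq_sum_lucasTerm,
      show n / 2 = (n - 2) / 2 + 1 by omega, sum_range_succ]
  refine ⟨fun he => ?_, fun ho => ?_⟩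
  · rw [hsplit, lucasTerm_half_of_even h he (by omega)]
    ring
  · rw [hsplit, lucasTerm_half_of_odd h ho]
    ring
end

section
/- For all n ≥ 1 and real h with h² + 4 ≠ 0, ∑_{i=0}^{⌊(n-1)/2⌋} i·C(n-1-i, i)·h^{n-1-2i} = (((h²+4)·n − 4)·F_{h,n} − n·h·L_{h,n}) / (2(h²+4)). -/
open Finset

noncomputable def Fb (h : ℝ) (n : ℕ) : ℝ :=
  ∑ i ∈ Finset.range n, (Nat.choose (n - 1 - i) i : ℝ) * h ^ (n - 1 - 2 * i)

noncomputable def T (h : ℝ) (n : ℕ) : ℝ :=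
  ∑ i ∈ Finset.range n, (i : ℝ) * (Nat.choose (n - 1 - i) i : ℝ) * h ^ (n - 1 - 2 * i)

-- termwise power shift lemma
lemma term_shift (h : ℝ) (n i : ℕ) :
    (Nat.choose (n - 1 - i) (i + 1) : ℝ) * h ^ (n - 1 - 2 * i) =
    (Nat.choose (n - 1 - i) (i + 1) : ℝ) * (h * h ^ (n - 2 * (i + 1))) := by
  by_cases hc : i + 1 ≤ n - 1 - i
  · have e : n - 1 - 2 * i = (n - 2 * (i + 1)) + 1 := by omega
    rw [e, pow_succ]
    ring
  · have : Nat.choose (n - 1 - i) (i + 1) = 0 := Nat.choose_eq_zero_of_lt (by omega)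
    simp [this]

lemma Fb_rec (h : ℝ) (n : ℕ) : Fb h (n + 2) = h * Fb h (n + 1) + Fb h n := by
  have e1 : Fb h (n + 2) =
      ∑ i ∈ Finset.range (n + 1), (Nat.choose (n - i) (i + 1) : ℝ) * h ^ (n - 1 - 2 * i)
        + h ^ (n + 1) := by
    rw [Fb, Finset.sum_range_succ']
    congr 1
    · apply Finset.sum_congr rfl
      intro i _
      congr 2
      · congr 1 <;> omega
      · omega
    · simp
  rw [e1, Finset.sum_range_succ]
  have e2 : (Nat.choose (n - n) (n + 1) : ℝ) = 0 := by simp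
  rw [e2]
  have e3 : ∀ i ∈ Finset.range n,
      (Nat.choose (n - i) (i + 1) : ℝ) * h ^ (n - 1 - 2 * i) =
      (Nat.choose (n - 1 - i) i : ℝ) * h ^ (n - 1 - 2 * i)
        + (Nat.choose (n - 1 - i) (i + 1) : ℝ) * h ^ (n - 1 - 2 * i) := by
    intro i hi
    rw [Finset.mem_range] at hi
    have e : n - i = (n - 1 - i) + 1 := by omega
    rw [e, Nat.choose_succ_succ' (n - 1 - i) i]
    push_cast
    ring
  rw [Finset.sum_congr rfl e3, Finset.sum_add_distrib]
  have e4 : h * Fb h (n + 1) =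
      ∑ i ∈ Finset.range n, (Nat.choose (n - 1 - i) (i + 1) : ℝ) * (h * h ^ (n - 2 * (i + 1)))
        + h ^ (n + 1) := by
    rw [Fb, Finset.mul_sum, Finset.sum_range_succ']
    congr 1
    · apply Finset.sum_congr rfl
      intro i _
      have e : n + 1 - 1 - (i + 1) = n - 1 - i := by omega
      have e' : n + 1 - 1 - 2 * (i + 1) = n - 2 * (i + 1) := by omega
      rw [e, e']
      ring
    · simp [pow_succ]; ring
  rw [e4, Finset.sum_congr rfl (fun i _ => term_shift h n i)]
  rw [Fb]
  ring

lemma T_rec (h : ℝ) (n : ℕ) : T h (n + 2) = h * T h (n + 1) + T h n + Fb h n := by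
  have e1 : T h (n + 2) =
      ∑ i ∈ Finset.range (n + 1), ((i : ℝ) + 1) * (Nat.choose (n - i) (i + 1) : ℝ) * h ^ (n - 1 - 2 * i) := by
    rw [T, Finset.sum_range_succ']
    simp only [Nat.cast_zero, zero_mul, add_zero]
    apply Finset.sum_congr rfl
    intro i _
    have e : n + 2 - 1 - (i + 1) = n - i := by omega
    have e' : n + 2 - 1 - 2 * (i + 1) = n - 1 - 2 * i := by omega
    rw [e, e']
    push_cast
    ring
  rw [e1, Finset.sum_range_succ]
  have e2 : (Nat.choose (n - n) (n + 1) : ℝ) = 0 := by simp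
  rw [e2]
  have e3 : ∀ i ∈ Finset.range n,
      ((i : ℝ) + 1) * (Nat.choose (n - i) (i + 1) : ℝ) * h ^ (n - 1 - 2 * i) =
      ((i : ℝ) * (Nat.choose (n - 1 - i) i : ℝ) * h ^ (n - 1 - 2 * i)
        + (Nat.choose (n - 1 - i) i : ℝ) * h ^ (n - 1 - 2 * i))
        + ((i : ℝ) + 1) * ((Nat.choose (n - 1 - i) (i + 1) : ℝ) * h ^ (n - 1 - 2 * i)) := by
    intro i hi
    rw [Finset.mem_range] at hi
    have e : n - i = (n - 1 - i) + 1 := by omega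
    rw [e, Nat.choose_succ_succ' (n - 1 - i) i]
    push_cast
    ring
  rw [Finset.sum_congr rfl e3, Finset.sum_add_distrib, Finset.sum_add_distrib]
  have e4 : h * T h (n + 1) =
      ∑ i ∈ Finset.range n, ((i : ℝ) + 1) * ((Nat.choose (n - 1 - i) (i + 1) : ℝ) * (h * h ^ (n - 2 * (i + 1)))) := by
    rw [T, Finset.mul_sum, Finset.sum_range_succ']
    simp only [Nat.cast_zero, zero_mul, mul_zero, add_zero]
    apply Finset.sum_congr rfl
    intro i _
    have e : n + 1 - 1 - (i + 1) = n - 1 - i := by omega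
    rw [e]
    push_cast
    ring
  rw [e4]
  have e5 : ∀ i ∈ Finset.range n,
      ((i : ℝ) + 1) * ((Nat.choose (n - 1 - i) (i + 1) : ℝ) * h ^ (n - 1 - 2 * i)) =
      ((i : ℝ) + 1) * ((Nat.choose (n - 1 - i) (i + 1) : ℝ) * (h * h ^ (n - 2 * (i + 1)))) := by
    intro i _
    rw [term_shift]
  rw [Finset.sum_congr rfl e5, T, Fb]
  ring

lemma Fb_eq_Fh (h : ℝ) : ∀ n, Fb h n = Fh h n := by
  have key : ∀ n, Fb h n = Fh h n ∧ Fb h (n + 1) = Fh h (n + 1) := by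
    intro n
    induction n with
    | zero =>
      constructor
      · simp [Fb, Fh]
      · simp [Fb, Fh]
    | succ n ih =>
      refine ⟨ih.2, ?_⟩
      rw [Fb_rec, ih.1, ih.2]
      show _ = Fh h (n + 2)
      rw [Fh]
  exact fun n => (key n).1

lemma lucid (h : ℝ) : ∀ n, (h ^ 2 + 4) * Fh h (n + 1) = h * Lh h (n + 1) + 2 * Lh h n := by
  have key : ∀ n, ((h ^ 2 + 4) * Fh h (n + 1) = h * Lh h (n + 1) + 2 * Lh h n) ∧
      ((h ^ 2 + 4) * Fh h (n + 2) = h * Lh h (n + 2) + 2 * Lh h (n + 1)) := by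
    intro n
    induction n with
    | zero =>
      constructor
      · show (h ^ 2 + 4) * Fh h 1 = h * Lh h 1 + 2 * Lh h 0
        simp [Fh, Lh]; ring
      · show (h ^ 2 + 4) * Fh h 2 = h * Lh h 2 + 2 * Lh h 1
        show (h ^ 2 + 4) * (h * Fh h 1 + Fh h 0) = h * (h * Lh h 1 + Lh h 0) + 2 * Lh h 1
        simp [Fh, Lh]; ring
    | succ n ih =>
      refine ⟨ih.2, ?_⟩
      show (h ^ 2 + 4) * Fh h (n + 3) = h * Lh h (n + 3) + 2 * Lh h (n + 2)
      have hF : Fh h (n + 3) = h * Fh h (n + 2) + Fh h (n + 1) := rfl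
      have hL : Lh h (n + 3) = h * Lh h (n + 2) + Lh h (n + 1) := rfl
      have hL2 : Lh h (n + 2) = h * Lh h (n + 1) + Lh h n := rfl
      rw [hF, hL]
      linear_combination h * ih.2 + ih.1 - 2 * hL2
  exact fun n => (key n).1

noncomputable def G (h : ℝ) (n : ℕ) : ℝ :=
  (((h ^ 2 + 4) * n - 4) * Fh h n - (n : ℝ) * h * Lh h n) / (2 * (h ^ 2 + 4))

lemma T_eq_G (h : ℝ) : ∀ n, T h n = G h n := by
  have h2 : (h ^ 2 + 4) ≠ 0 := by positivity
  have key : ∀ n, T h n = G h n ∧ T h (n + 1) = G h (n + 1) := by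
    intro n
    induction n with
    | zero =>
      constructor
      · simp [T, G, Fh, Lh]
      · simp [T, G, Fh, Lh]
        ring_nf
    | succ n ih =>
      refine ⟨ih.2, ?_⟩
      rw [T_rec, Fb_eq_Fh, ih.1, ih.2]
      have hF : Fh h (n + 2) = h * Fh h (n + 1) + Fh h n := rfl
      have hL : Lh h (n + 2) = h * Lh h (n + 1) + Lh h n := rfl
      have lr := lucid h n
      rw [G, G, G, hF, hL]
      push_cast
      field_simp
      linear_combination (-h) * lr
  exact fun n => (key n).1

theorem weighted_sum_incF (h : ℝ) (n : ℕ) (hn : 1 ≤ n) (hh : h ^ 2 + 4 ≠ 0) :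
    ∑ i ∈ Finset.range ((n - 1) / 2 + 1),
        (i : ℝ) * (Nat.choose (n - 1 - i) i : ℝ) * h ^ (n - 1 - 2 * i) =
      (((h ^ 2 + 4) * n - 4) * Fh h n - (n : ℝ) * h * Lh h n) / (2 * (h ^ 2 + 4)) := by
  have hsub : Finset.range ((n - 1) / 2 + 1) ⊆ Finset.range n := by
    intro i hi
    rw [Finset.mem_range] at *
    omega
  have hzero : ∀ i ∈ Finset.range n, i ∉ Finset.range ((n - 1) / 2 + 1) →
      (i : ℝ) * (Nat.choose (n - 1 - i) i : ℝ) * h ^ (n - 1 - 2 * i) = 0 := by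
    intro i _ hi
    rw [Finset.mem_range] at hi
    have : Nat.choose (n - 1 - i) i = 0 := Nat.choose_eq_zero_of_lt (by omega)
    simp [this]
  rw [Finset.sum_subset hsub hzero]
  exact T_eq_G h n
end

section
/- For n ≥ 1 even, ∑_{l=0}^{⌊(n-1)/2⌋} F_{h,n}^{l} = (4·F_{h,n} + n·h·L_{h,n}) / (2(h²+4)); for n odd, ∑_{l=0}^{⌊(n-1)/2⌋} F_{h,n}^{l} = ((h²+8)·F_{h,n} + n·h·L_{h,n}) / (2(h²+4)). -/
open Finset

noncomputable def P (h : ℝ) (w : ℕ → ℝ) (a k : ℕ) : ℝ :=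
  ∑ i ∈ Finset.range (k + 1), w i * ((2 * k + a - i).choose i : ℝ) * h ^ (2 * (k - i) + a)

lemma step (h : ℝ) (w : ℕ → ℝ) (a k : ℕ) :
    P h w a (k + 1)
      = (∑ i ∈ Finset.range (k + 2), w i * ((2 * k + 1 + a - i).choose i : ℝ) * h ^ (2 * (k + 1 - i) + a))
        + P h (fun i => w (i + 1)) a k := by
  unfold P
  rw [Finset.sum_range_succ' (fun i => w i * ((2 * (k+1) + a - i).choose i : ℝ) * h ^ (2 * (k + 1 - i) + a)) (k+1),
      Finset.sum_range_succ' (fun i => w i * ((2 * k + 1 + a - i).choose i : ℝ) * h ^ (2 * (k + 1 - i) + a)) (k+1)]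
  simp only [Nat.sub_zero, Nat.choose_zero_right, Nat.cast_one]
  rw [add_right_comm, ← Finset.sum_add_distrib]
  congr 1
  apply Finset.sum_congr rfl
  intro i hi
  simp only [Finset.mem_range] at hi
  have e1 : 2 * (k+1) + a - (i + 1) = (2 * k + a - i) + 1 := by omega
  have e2 : 2 * k + 1 + a - (i + 1) = 2 * k + a - i := by omega
  have e3 : k + 1 - (i + 1) = k - i := by omega
  rw [e1, e2, e3, Nat.choose_succ_succ]
  push_cast
  ring

lemma stepA (h : ℝ) (w : ℕ → ℝ) (k : ℕ) :
    P h w 0 (k + 1) = h * P h w 1 k + P h (fun i => w (i + 1)) 0 k := by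
  rw [step]
  congr 1
  rw [Finset.sum_range_succ]
  have hz : ((2 * k + 1 + 0 - (k+1)).choose (k+1) : ℝ) = 0 := by
    rw [Nat.choose_eq_zero_of_lt (by omega)]; simp
  rw [hz]
  unfold P
  rw [Finset.mul_sum]
  simp only [mul_zero, zero_mul, add_zero]
  apply Finset.sum_congr rfl
  intro i hi
  simp only [Finset.mem_range] at hi
  have e1 : 2 * (k + 1 - i) = (2 * (k - i) + 1) + 1 := by omega
  have e2 : 2 * k + 1 + 0 - i = 2 * k + 1 - i := by omega
  rw [e1, e2, pow_succ]
  ring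

lemma stepB (h : ℝ) (w : ℕ → ℝ) (k : ℕ) :
    P h w 1 (k + 1) = h * P h w 0 (k + 1) + P h (fun i => w (i + 1)) 1 k := by
  rw [step]
  congr 1
  unfold P
  rw [Finset.mul_sum]
  apply Finset.sum_congr rfl
  intro i hi
  simp only [Finset.mem_range] at hi
  have e1 : 2 * k + 1 + 1 - i = 2 * (k+1) + 0 - i := by omega
  have e2 : 2 * (k + 1 - i) + 1 = (2 * ((k+1) - i) + 0) + 1 := by omega
  rw [e1, e2, pow_succ]
  ring

noncomputable def Sodd (h : ℝ) (k : ℕ) : ℝ := P h (fun _ => 1) 0 k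
noncomputable def Seven (h : ℝ) (k : ℕ) : ℝ := P h (fun _ => 1) 1 k
noncomputable def Todd (h : ℝ) (k : ℕ) : ℝ := P h (fun i => ((k + 1 - i : ℕ) : ℝ)) 0 k
noncomputable def Teven (h : ℝ) (k : ℕ) : ℝ := P h (fun i => ((k + 1 - i : ℕ) : ℝ)) 1 k

lemma Sodd_rec (h : ℝ) (k : ℕ) : Sodd h (k+1) = h * Seven h k + Sodd h k := stepA h _ k
lemma Seven_rec (h : ℝ) (k : ℕ) : Seven h (k+1) = h * Sodd h (k+1) + Seven h k := stepB h _ k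

lemma S_closed (h : ℝ) (k : ℕ) : Sodd h k = Fh h (2*k+1) ∧ Seven h k = Fh h (2*k+2) := by
  induction k with
  | zero => constructor <;> simp [Sodd, Seven, P, Fh]
  | succ k ih =>
    have e1 : 2*(k+1)+1 = (2*k+1)+2 := by ring
    have e2 : 2*(k+1)+2 = (2*k+2)+2 := by ring
    have f1 : Fh h ((2*k+1)+2) = h * Fh h (2*k+2) + Fh h (2*k+1) := rfl
    have f2 : Fh h ((2*k+2)+2) = h * Fh h ((2*k+1)+2) + Fh h (2*k+2) := rfl
    constructor
    · rw [Sodd_rec, ih.1, ih.2, e1, f1]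
    · rw [Seven_rec, Sodd_rec, ih.1, ih.2, e2, f2, f1]

lemma Todd_rec (h : ℝ) (k : ℕ) :
    Todd h (k+1) = h * Teven h k + h * Seven h k + Todd h k := by
  unfold Todd Teven Seven
  rw [stepA]
  congr 1
  · -- h * P (fun i => (k+2-i)) 1 k = h * Teven + h * Seven
    unfold P
    rw [Finset.mul_sum, Finset.mul_sum, Finset.mul_sum, ← Finset.sum_add_distrib]
    apply Finset.sum_congr rfl
    intro i hi
    simp only [Finset.mem_range] at hi
    have e1 : k + 1 + 1 - i = (k + 1 - i) + 1 := by omega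
    simp only [e1]
    push_cast
    ring
  · unfold P
    apply Finset.sum_congr rfl
    intro i _
    have e1 : k + 1 + 1 - (i + 1) = k + 1 - i := by omega
    simp only [e1]

lemma Teven_rec (h : ℝ) (k : ℕ) :
    Teven h (k+1) = h * Todd h (k+1) + Teven h k := by
  unfold Teven Todd
  rw [stepB]
  congr 1
  unfold P
  apply Finset.sum_congr rfl
  intro i _
  have e1 : k + 1 + 1 - (i + 1) = k + 1 - i := by omega
  simp only [e1]

lemma Lid (h : ℝ) (n : ℕ) : (h^2+4) * Fh h (n+1) = Lh h (n+2) + Lh h n := by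
  induction n using Nat.twoStepInduction with
  | zero => simp [Fh, Lh]; ring
  | one =>
    have : Lh h 3 = h * Lh h 2 + Lh h 1 := rfl
    simp [Fh, Lh, this]; ring
  | more n ih1 ih2 =>
    have f : Fh h (n+3) = h * Fh h (n+2) + Fh h (n+1) := rfl
    have l : Lh h (n+4) = h * Lh h (n+3) + Lh h (n+2) := rfl
    rw [show n+2+1 = n+3 from rfl, show n+3+1 = n+4 from rfl] at *
    have lrec : Lh h (n+2) = h * Lh h (n+1) + Lh h n := rfl
    rw [f, l]
    linear_combination h * ih2 + ih1 - lrec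

lemma main (h : ℝ) (k : ℕ) :
    2*(h^2+4) * Todd h k = (h^2+8) * Fh h (2*k+1) + (2*(k:ℝ)+1) * h * Lh h (2*k+1)
    ∧ 2*(h^2+4) * Teven h k = 4 * Fh h (2*k+2) + (2*(k:ℝ)+2) * h * Lh h (2*k+2) := by
  induction k with
  | zero =>
    constructor <;> · simp [Todd, Teven, P, Fh, Lh]; ring
  | succ k ih =>
    have hSe : Seven h k = Fh h (2*k+2) := (S_closed h k).2
    have f3 : Fh h (2*k+3) = h * Fh h (2*k+2) + Fh h (2*k+1) := rfl
    have f4 : Fh h (2*k+4) = h * Fh h (2*k+3) + Fh h (2*k+2) := rfl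
    have l3 : Lh h (2*k+3) = h * Lh h (2*k+2) + Lh h (2*k+1) := rfl
    have l4 : Lh h (2*k+4) = h * Lh h (2*k+3) + Lh h (2*k+2) := rfl
    have luc1 : (h^2+4) * Fh h (2*k+2) = h * Lh h (2*k+2) + 2 * Lh h (2*k+1) := by
      have := Lid h (2*k+1)
      rw [show 2*k+1+1 = 2*k+2 from rfl, show 2*k+1+2 = 2*k+3 from rfl, l3] at this
      linear_combination this
    have luc2 : (h^2+4) * Fh h (2*k+3) = h * Lh h (2*k+3) + 2 * Lh h (2*k+2) := by
      have := Lid h (2*k+2)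
      rw [show 2*k+2+1 = 2*k+3 from rfl, show 2*k+2+2 = 2*k+4 from rfl, l4] at this
      linear_combination this
    have e1 : 2*(k+1)+1 = 2*k+3 := by ring
    have e2 : 2*(k+1)+2 = 2*k+4 := by ring
    have g1 : 2*(h^2+4) * Todd h (k+1)
        = (h^2+8) * Fh h (2*k+3) + (2*(k:ℝ)+3) * h * Lh h (2*k+3) := by
      rw [Todd_rec, hSe, f3, l3]
      linear_combination h * ih.2 + ih.1 + h * luc1
    constructor
    · rw [e1]; push_cast; linear_combination g1
    · rw [e2, Teven_rec]
      push_cast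
      rw [f4, l4]
      linear_combination h * g1 + ih.2 + h * luc2

lemma sum_swap_tri (f : ℕ → ℝ) (m : ℕ) :
    ∑ l ∈ Finset.range (m+1), ∑ i ∈ Finset.range (l+1), f i
      = ∑ i ∈ Finset.range (m+1), ((m + 1 - i : ℕ) : ℝ) * f i := by
  induction m with
  | zero => simp
  | succ m ih =>
    rw [Finset.sum_range_succ, ih]
    rw [Finset.sum_range_succ (fun i => ((m + 1 + 1 - i : ℕ) : ℝ) * f i)]
    have e : ∀ i ∈ Finset.range (m+1),
        ((m + 1 + 1 - i : ℕ) : ℝ) * f i = ((m + 1 - i : ℕ) : ℝ) * f i + f i := by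
      intro i hi
      simp only [Finset.mem_range] at hi
      have : m + 1 + 1 - i = (m + 1 - i) + 1 := by omega
      rw [this]; push_cast; ring
    rw [Finset.sum_congr rfl e, Finset.sum_add_distrib]
    simp [Finset.sum_range_succ]
    ring

lemma conv_odd (h : ℝ) (k : ℕ) :
    ∑ l ∈ Finset.range (k+1), incF h (2*k+1) l = Todd h k := by
  have hf : ∀ l, incF h (2*k+1) l
      = ∑ i ∈ Finset.range (l+1), (((2*k - i).choose i : ℝ) * h ^ (2*k - 2*i)) := by
    intro l
    apply Finset.sum_congr rfl
    intro i _
    congr 2 <;> omega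
  simp only [hf]
  rw [sum_swap_tri]
  unfold Todd P
  apply Finset.sum_congr rfl
  intro i hi
  simp only [Finset.mem_range] at hi
  have e1 : 2*k - 2*i = 2*(k-i) + 0 := by omega
  have e2 : 2*k + 0 - i = 2*k - i := by omega
  rw [e1, e2, mul_assoc]

lemma conv_even (h : ℝ) (k : ℕ) :
    ∑ l ∈ Finset.range (k+1), incF h (2*k+2) l = Teven h k := by
  have hf : ∀ l, incF h (2*k+2) l
      = ∑ i ∈ Finset.range (l+1), (((2*k+1 - i).choose i : ℝ) * h ^ (2*k+1 - 2*i)) := by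
    intro l
    apply Finset.sum_congr rfl
    intro i _
    congr 2 <;> omega
  simp only [hf]
  rw [sum_swap_tri]
  unfold Teven P
  apply Finset.sum_congr rfl
  intro i hi
  simp only [Finset.mem_range] at hi
  have e1 : 2*k+1 - 2*i = 2*(k-i) + 1 := by omega
  have e2 : 2*k + 1 - i = 2*k+1 - i := by omega
  rw [e1, e2, mul_assoc]

theorem sum_incF (h : ℝ) (n : ℕ) (hn : 1 ≤ n) :
    (Even n → ∑ l ∈ Finset.range ((n - 1) / 2 + 1), incF h n l =
        (4 * Fh h n + (n : ℝ) * h * Lh h n) / (2 * (h ^ 2 + 4))) ∧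
    (Odd n → ∑ l ∈ Finset.range ((n - 1) / 2 + 1), incF h n l =
        ((h ^ 2 + 8) * Fh h n + (n : ℝ) * h * Lh h n) / (2 * (h ^ 2 + 4))) := by
  have hd : (2 : ℝ) * (h ^ 2 + 4) ≠ 0 := by positivity
  constructor
  · intro he
    obtain ⟨m, hm⟩ := he
    have hk : ∃ k, n = 2*k + 2 := ⟨m - 1, by omega⟩
    obtain ⟨k, rfl⟩ := hk
    have er : (2*k+2 - 1)/2 + 1 = k + 1 := by omega
    rw [er, conv_even]
    rw [eq_div_iff hd]
    have := (main h k).2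
    push_cast
    linear_combination this
  · intro ho
    obtain ⟨m, hm⟩ := ho
    have hk : ∃ k, n = 2*k + 1 := ⟨m, by omega⟩
    obtain ⟨k, rfl⟩ := hk
    have er : (2*k+1 - 1)/2 + 1 = k + 1 := by omega
    rw [er, conv_odd]
    rw [eq_div_iff hd]
    have := (main h k).1
    push_cast
    linear_combination this
end

section
/- For all n ≥ 1 and 0 ≤ l ≤ ⌊n/2⌋, the incomplete h-Lucas polynomials satisfy L_{h,n+2}^{l+1}(x) = h(x)·L_{h,n+1}^{l+1}(x) + L_{h,n}^{l}(x). -/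
open Finset

lemma lucas_coeff_key (m j : ℕ) :
    ((m + j + 3 : ℕ) : ℝ) / ((m + 2 : ℕ) : ℝ) * ((m + 2).choose (j + 1) : ℝ)
      = ((m + j + 2 : ℕ) : ℝ) / ((m + 1 : ℕ) : ℝ) * ((m + 1).choose (j + 1) : ℝ)
        + ((m + j + 1 : ℕ) : ℝ) / ((m + 1 : ℕ) : ℝ) * ((m + 1).choose j : ℝ) := by
  have h1 : ((m + 2).choose (j + 1) : ℝ) = ((m + 1).choose (j + 1) : ℝ) + ((m + 1).choose j : ℝ) := by
    have := Nat.choose_succ_succ (m + 1) j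
    push_cast [this]; ring
  have h2 : ((j : ℝ) + 1) * ((m + 1).choose (j + 1) : ℝ)
      = ((m : ℝ) + 1 - (j : ℝ)) * ((m + 1).choose j : ℝ) := by
    rcases le_or_gt j (m + 1) with hj | hj
    · have := Nat.choose_succ_right_eq (m + 1) j
      have hcast : ((m + 1).choose (j + 1) : ℝ) * ((j : ℝ) + 1)
          = ((m + 1).choose j : ℝ) * (((m + 1 - j : ℕ) : ℝ)) := by
        exact_mod_cast congrArg (Nat.cast (R := ℝ)) this
      have hsub : ((m + 1 - j : ℕ) : ℝ) = (m : ℝ) + 1 - (j : ℝ) := by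
        push_cast [Nat.cast_sub (by omega : j ≤ m + 1)]; ring
      rw [hsub] at hcast; linarith [hcast]
    · have e1 : (m + 1).choose (j + 1) = 0 := Nat.choose_eq_zero_of_lt (by omega)
      have e2 : (m + 1).choose j = 0 := Nat.choose_eq_zero_of_lt (by omega)
      simp [e1, e2]
  have hm2 : ((m : ℝ) + 2) ≠ 0 := by positivity
  have hm1 : ((m : ℝ) + 1) ≠ 0 := by positivity
  rw [h1]
  push_cast
  field_simp
  linear_combination -h2

theorem incL_recurrence (h : ℝ) (n l : ℕ) (hn : 1 ≤ n) (hl : l ≤ n / 2) :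
    incL h (n + 2) (l + 1) = h * incL h (n + 1) (l + 1) + incL h n l := by
  have h2l : 2 * l ≤ n := by omega
  simp only [incL]
  rw [Finset.mul_sum]
  have EL := Finset.sum_range_succ' (fun i =>
    (((n + 2 : ℕ) : ℝ) / (((n + 2 - i : ℕ)) : ℝ)) * (Nat.choose (n + 2 - i) i : ℝ)
      * h ^ (n + 2 - 2 * i)) (l + 1)
  have EM := Finset.sum_range_succ' (fun i =>
    h * ((((n + 1 : ℕ) : ℝ) / (((n + 1 - i : ℕ)) : ℝ)) * (Nat.choose (n + 1 - i) i : ℝ)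
      * h ^ (n + 1 - 2 * i))) (l + 1)
  rw [EL, EM]
  have h0T : (((n + 2 : ℕ) : ℝ) / (((n + 2 - 0 : ℕ)) : ℝ)) * (Nat.choose (n + 2 - 0) 0 : ℝ)
        * h ^ (n + 2 - 2 * 0)
      = h * ((((n + 1 : ℕ) : ℝ) / (((n + 1 - 0 : ℕ)) : ℝ)) * (Nat.choose (n + 1 - 0) 0 : ℝ)
        * h ^ (n + 1 - 2 * 0)) := by
    have a1 : (((n + 2 : ℕ)) : ℝ) ≠ 0 := by positivity
    have a2 : (((n + 1 : ℕ)) : ℝ) ≠ 0 := by positivity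
    simp only [Nat.sub_zero, Nat.choose_zero_right, Nat.cast_one, mul_one, Nat.mul_zero,
      div_self a1, div_self a2, one_mul]
    rw [show n + 2 = (n + 1) + 1 from by omega, pow_succ]
    ring
  have hterm : ∀ i ∈ Finset.range (l + 1),
      (((n + 2 : ℕ) : ℝ) / (((n + 2 - (i + 1) : ℕ)) : ℝ)) * (Nat.choose (n + 2 - (i + 1)) (i + 1) : ℝ)
          * h ^ (n + 2 - 2 * (i + 1))
        = h * ((((n + 1 : ℕ) : ℝ) / (((n + 1 - (i + 1) : ℕ)) : ℝ))
            * (Nat.choose (n + 1 - (i + 1)) (i + 1) : ℝ) * h ^ (n + 1 - 2 * (i + 1)))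
          + (((n : ℕ) : ℝ) / (((n - i : ℕ)) : ℝ)) * (Nat.choose (n - i) i : ℝ) * h ^ (n - 2 * i) := by
    intro i hi
    rw [Finset.mem_range] at hi
    have hil : i ≤ l := by omega
    have h2i : 2 * i ≤ n := by omega
    set m := n - i - 1 with hm
    have K := lucas_coeff_key m i
    rw [show m + i + 3 = n + 2 from by omega, show m + i + 2 = n + 1 from by omega,
      show m + i + 1 = n from by omega] at K
    rw [show n + 2 - 2 * (i + 1) = n - 2 * i from by omega,
      show n + 1 - 2 * (i + 1) = n - 2 * i - 1 from by omega,
      show n + 2 - (i + 1) = m + 2 from by omega,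
      show n + 1 - (i + 1) = m + 1 from by omega,
      show n - i = m + 1 from by omega]
    rcases Nat.lt_or_ge (2 * i) n with hc | hc
    · have hp : h ^ (n - 2 * i) = h ^ (n - 2 * i - 1) * h := by
        rw [← pow_succ]; congr 1; omega
      rw [hp]
      linear_combination (h ^ (n - 2 * i - 1) * h) * K
    · have hc' : 2 * i = n := by omega
      have hz : (m + 1).choose (i + 1) = 0 := Nat.choose_eq_zero_of_lt (by omega)
      rw [hz] at K ⊢
      rw [show n - 2 * i = 0 from by omega]
      simp only [Nat.cast_zero, pow_zero, mul_zero, zero_mul, mul_one, Nat.zero_sub]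
      linear_combination K
  rw [Finset.sum_congr rfl hterm, Finset.sum_add_distrib, h0T]
  ring
end

section
/- For all n and 2 ≤ l ≤ ⌊(n-1)/2⌋, h(x)·L_{h,n}^{l}(x) = F_{h,n+2}^{l}(x) − F_{h,n-2}^{l-2}(x). -/
open Finset

lemma choose_key (k d : ℕ) :
    ((2*k+5+d : ℕ) : ℝ) / ((k+3+d : ℕ) : ℝ) * (Nat.choose (k+3+d) (k+2) : ℝ)
      + (Nat.choose (k+2+d) k : ℝ) = (Nat.choose (k+4+d) (k+2) : ℝ) := by
  have f1n : (k+3+d) * Nat.choose (k+2+d) (k+1) = Nat.choose (k+3+d) (k+2) * (k+2) := by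
    have := Nat.add_one_mul_choose_eq (k+2+d) (k+1)
    simpa [Nat.succ_eq_add_one, show k+2+d+1 = k+3+d from by omega] using this
  have f2n : Nat.choose (k+4+d) (k+2) = Nat.choose (k+3+d) (k+1) + Nat.choose (k+3+d) (k+2) := by
    have := Nat.choose_succ_succ (k+3+d) (k+1)
    simpa [Nat.succ_eq_add_one, show k+3+d+1 = k+4+d from by omega] using this
  have f3n : Nat.choose (k+3+d) (k+1) = Nat.choose (k+2+d) k + Nat.choose (k+2+d) (k+1) := by
    have := Nat.choose_succ_succ (k+2+d) k
    simpa [Nat.succ_eq_add_one, show k+2+d+1 = k+3+d from by omega] using this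
  have f1 : ((k:ℝ)+3+d) * (Nat.choose (k+2+d) (k+1) : ℝ)
      = (Nat.choose (k+3+d) (k+2) : ℝ) * ((k:ℝ)+2) := by exact_mod_cast f1n
  have f2 : (Nat.choose (k+4+d) (k+2) : ℝ)
      = (Nat.choose (k+3+d) (k+1) : ℝ) + (Nat.choose (k+3+d) (k+2) : ℝ) := by exact_mod_cast f2n
  have f3 : (Nat.choose (k+3+d) (k+1) : ℝ)
      = (Nat.choose (k+2+d) k : ℝ) + (Nat.choose (k+2+d) (k+1) : ℝ) := by exact_mod_cast f3n
  have hne : ((k+3+d : ℕ) : ℝ) ≠ 0 := by positivity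
  rw [div_mul_eq_mul_div, div_add' _ _ _ hne, div_eq_iff hne]
  push_cast
  linear_combination (-1:ℝ) * f1 - ((k:ℝ)+3+d) * f2 - ((k:ℝ)+3+d) * f3

lemma term_key (h : ℝ) (k d : ℕ) :
    h * (((2*k+5+d : ℕ) : ℝ) / ((k+3+d : ℕ) : ℝ) * (Nat.choose (k+3+d) (k+2) : ℝ) * h ^ (d+1))
      + (Nat.choose (k+2+d) k : ℝ) * h ^ (d+2)
      = (Nat.choose (k+4+d) (k+2) : ℝ) * h ^ (d+2) := by
  have := choose_key k d
  calc h * (((2*k+5+d : ℕ) : ℝ) / ((k+3+d : ℕ) : ℝ) * (Nat.choose (k+3+d) (k+2) : ℝ) * h ^ (d+1))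
        + (Nat.choose (k+2+d) k : ℝ) * h ^ (d+2)
      = (((2*k+5+d : ℕ) : ℝ) / ((k+3+d : ℕ) : ℝ) * (Nat.choose (k+3+d) (k+2) : ℝ)
          + (Nat.choose (k+2+d) k : ℝ)) * h ^ (d+2) := by ring
    _ = (Nat.choose (k+4+d) (k+2) : ℝ) * h ^ (d+2) := by rw [this]

theorem h_mul_incL (h : ℝ) (n l : ℕ) (hl2 : 2 ≤ l) (hl : l ≤ (n - 1) / 2) :
    h * incL h n l = incF h (n + 2) l - incF h (n - 2) (l - 2) := by
  have hn : 2 * l + 1 ≤ n := by omega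
  rw [incL, incF, incF, Finset.mul_sum]
  have hb : (∑ i ∈ Finset.range (l - 2 + 1), (Nat.choose (n - 2 - 1 - i) i : ℝ) * h ^ (n - 2 - 1 - 2 * i))
      = ∑ i ∈ Finset.Ico 2 (l + 1),
          (Nat.choose (n - 2 - 1 - (i - 2)) (i - 2) : ℝ) * h ^ (n - 2 - 1 - 2 * (i - 2)) := by
    rw [Finset.sum_Ico_eq_sum_range, show l + 1 - 2 = l - 2 + 1 from by omega]
    refine Finset.sum_congr rfl fun i _ => ?_
    rw [show 2 + i - 2 = i from by omega]
  rw [hb]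
  rw [Finset.range_eq_Ico,
    ← Finset.sum_Ico_consecutive (f := fun i => h * (((n : ℝ) / ((n - i : ℕ) : ℝ)) * (Nat.choose (n - i) i : ℝ) * h ^ (n - 2 * i))) (Nat.zero_le 2) (by omega : 2 ≤ l + 1),
    ← Finset.sum_Ico_consecutive (f := fun i => (Nat.choose (n + 2 - 1 - i) i : ℝ) * h ^ (n + 2 - 1 - 2 * i)) (Nat.zero_le 2) (by omega : 2 ≤ l + 1)]
  have hIco : Finset.Ico 0 2 = Finset.range 2 := by rw [Finset.range_eq_Ico]
  rw [hIco, Finset.sum_range_succ, Finset.sum_range_succ, Finset.sum_range_succ,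
    Finset.sum_range_succ, Finset.sum_range_zero, Finset.sum_range_zero]
  have hn0 : ((n : ℝ)) ≠ 0 := by exact_mod_cast (by omega : n ≠ 0)
  have e0 : h * (((n : ℝ) / ((n - 0 : ℕ) : ℝ)) * (Nat.choose (n - 0) 0 : ℝ) * h ^ (n - 2 * 0))
      = (Nat.choose (n + 2 - 1 - 0) 0 : ℝ) * h ^ (n + 2 - 1 - 2 * 0) := by
    simp only [Nat.mul_zero, Nat.sub_zero, Nat.choose_zero_right]
    rw [show n + 2 - 1 = n + 1 from by omega, div_self hn0, pow_succ]
    push_cast; ring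
  have hn1 : ((n - 1 : ℕ) : ℝ) ≠ 0 := by exact_mod_cast (by omega : n - 1 ≠ 0)
  have e1 : h * (((n : ℝ) / ((n - 1 : ℕ) : ℝ)) * (Nat.choose (n - 1) 1 : ℝ) * h ^ (n - 2 * 1))
      = (Nat.choose (n + 2 - 1 - 1) 1 : ℝ) * h ^ (n + 2 - 1 - 2 * 1) := by
    rw [show n + 2 - 1 - 1 = n from by omega, show n + 2 - 1 - 2 * 1 = n - 1 from by omega,
      show n - 2 * 1 = n - 2 from by omega, Nat.choose_one_right, Nat.choose_one_right,
      div_mul_cancel₀ _ hn1, show n - 1 = n - 2 + 1 from by omega, pow_succ]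
    ring
  have eS : (∑ i ∈ Finset.Ico 2 (l + 1),
        h * (((n : ℝ) / ((n - i : ℕ) : ℝ)) * (Nat.choose (n - i) i : ℝ) * h ^ (n - 2 * i)))
      + (∑ i ∈ Finset.Ico 2 (l + 1),
          (Nat.choose (n - 2 - 1 - (i - 2)) (i - 2) : ℝ) * h ^ (n - 2 - 1 - 2 * (i - 2)))
      = ∑ i ∈ Finset.Ico 2 (l + 1), (Nat.choose (n + 2 - 1 - i) i : ℝ) * h ^ (n + 2 - 1 - 2 * i) := by
    rw [← Finset.sum_add_distrib]
    refine Finset.sum_congr rfl fun i hi => ?_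
    simp only [Finset.mem_Ico] at hi
    obtain ⟨k, rfl⟩ : ∃ k, i = k + 2 := ⟨i - 2, by omega⟩
    obtain ⟨d, rfl⟩ : ∃ d, n = 2 * k + 5 + d := ⟨n - (2 * k + 5), by omega⟩
    rw [show 2*k+5+d - (k+2) = k+3+d from by omega,
      show 2*k+5+d - 2*(k+2) = d+1 from by omega,
      show k+2-2 = k from by omega,
      show 2*k+5+d - 2 - 1 - k = k+2+d from by omega,
      show 2*k+5+d - 2 - 1 - 2*k = d+2 from by omega,
      show 2*k+5+d + 2 - 1 - (k+2) = k+4+d from by omega,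
      show 2*k+5+d + 2 - 1 - 2*(k+2) = d+2 from by omega]
    exact term_key h k d
  rw [e0, e1]
  linarith [eS]
end

section
/- For all s ≥ 0, n ≥ 1, and 0 ≤ l ≤ (n-s)/2, ∑_{i=0}^{s} C(s,i)·L_{h,n+i}^{l+i}(x)·h(x)^i = L_{h,n+2s}^{l+s}(x). -/
open Finset

/-! With `A`, `B` the shifts `n ↦ n + 1` and `l ↦ l + 1`, the recurrence
`L_{h,m+2}^{k+1} = h L_{h,m+1}^{k+1} + L_{h,m}^k` (valid for `m ≥ 1`) reads `A²B = h AB + 1`; its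
`s`-th power, expanded binomially, is the identity. The recurrence is inherited from the Pascal
recurrence of the incomplete Fibonacci polynomials through
`L_{h,n}^l = 2 F_{h,n+1}^l - h F_{h,n}^l`, which is `(n/(n-i)) C(n-i,i) = 2 C(n-i,i) - C(n-1-i,i)`
coefficientwise. -/

theorem Nat.choose_mul_pow_add_one_sub {R : Type*} [Semiring R] (x : R) (a b : ℕ) :
    (a.choose b : R) * x ^ (a + 1 - b) = (a.choose b : R) * (x * x ^ (a - b)) := by
  rcases le_or_gt b a with hba | hab
  · rw [Nat.sub_add_comm hba, _root_.pow_succ']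
  · simp [Nat.choose_eq_zero_of_lt hab]

theorem Nat.choose_sub_succ_eq_add {m : ℕ} (hm : 1 ≤ m) (i : ℕ) :
    (m - i).choose (i + 1) = (m - 1 - i).choose i + (m - 1 - i).choose (i + 1) := by
  rcases lt_or_ge i m with him | hmi
  · rw [show m - i = m - 1 - i + 1 by omega, Nat.choose_succ_succ']
  · simp [Nat.sub_eq_zero_of_le hmi, Nat.sub_eq_zero_of_le (show m - 1 ≤ i by omega),
      Nat.choose_eq_zero_of_lt (show 0 < i by omega)]

theorem div_mul_choose_eq_two_mul_choose_sub {K : Type*} [Field K] [CharZero K] {n : ℕ}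
    (hn : 1 ≤ n) (i : ℕ) :
    (n : K) / ((n - i : ℕ) : K) * ((n - i).choose i : K)
      = 2 * ((n - i).choose i : K) - ((n - 1 - i).choose i : K) := by
  rcases le_or_gt (2 * i) n with hle | hlt
  · obtain ⟨m, hm, hm'⟩ : ∃ m, n - i = m + 1 ∧ n - 1 - i = m := ⟨n - 1 - i, by omega, rfl⟩
    have hpascal : (m.choose i : K) * (m + 1) = ((m + 1).choose i : K) * ((m : K) + 1 - i) := by
      have := congrArg (Nat.cast (R := K)) (Nat.choose_mul_succ_eq m i)
      push_cast [Nat.cast_sub (show i ≤ m + 1 by omega)] at this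
      exact this
    have hn' : (n : K) = m + 1 + i := by exact_mod_cast (show n = m + 1 + i by omega)
    rw [hm, hm', hn']
    push_cast
    field_simp
    linear_combination hpascal
  · simp [Nat.choose_eq_zero_of_lt (show n - i < i by omega),
      Nat.choose_eq_zero_of_lt (show n - 1 - i < i by omega)]

theorem incL_eq_two_mul_incF_sub (h : ℝ) {n : ℕ} (hn : 1 ≤ n) (l : ℕ) :
    incL h n l = 2 * incF h (n + 1) l - h * incF h n l := by
  simp only [incL, incF, Nat.add_sub_cancel, mul_sum, ← sum_sub_distrib]
  refine sum_congr rfl fun i _ => ?_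
  rw [div_mul_choose_eq_two_mul_choose_sub hn, mul_left_comm h,
    show n - 1 - 2 * i = n - 1 - i - i by omega, ← Nat.choose_mul_pow_add_one_sub,
    show n - 1 - i + 1 - i = n - 2 * i by omega]
  ring

theorem incF_add_two_succ (h : ℝ) {m : ℕ} (hm : 1 ≤ m) (k : ℕ) :
    incF h (m + 2) (k + 1) = h * incF h (m + 1) (k + 1) + incF h m k := by
  have hterm : ∀ i, ((m + 2 - 1 - (i + 1)).choose (i + 1) : ℝ) * h ^ (m + 2 - 1 - 2 * (i + 1))
      = h * ((m + 1 - 1 - (i + 1)).choose (i + 1) * h ^ (m + 1 - 1 - 2 * (i + 1)))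
        + (m - 1 - i).choose i * h ^ (m - 1 - 2 * i) := by
    intro i
    rw [show m + 1 - 1 - (i + 1) = m - 1 - i by omega, show m + 2 - 1 - (i + 1) = m - i by omega,
      show m + 1 - 1 - 2 * (i + 1) = m - 1 - i - (i + 1) by omega,
      show m + 2 - 1 - 2 * (i + 1) = m - 1 - i + 1 - (i + 1) by omega,
      show m - 1 - 2 * i = m - 1 - i + 1 - (i + 1) by omega, mul_left_comm h,
      ← Nat.choose_mul_pow_add_one_sub, Nat.choose_sub_succ_eq_add hm]
    push_cast
    ring
  simp only [incF]
  rw [sum_range_succ' _ (k + 1), sum_range_succ' _ (k + 1), sum_congr rfl fun i _ => hterm i,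
    sum_add_distrib, mul_add, mul_sum]
  simp only [Nat.choose_zero_right, Nat.cast_one, one_mul, mul_zero, Nat.sub_zero]
  rw [show m + 2 - 1 = m + 1 by omega, Nat.add_sub_cancel, pow_succ']
  ring

theorem incL_add_two_succ (h : ℝ) {m : ℕ} (hm : 1 ≤ m) (k : ℕ) :
    incL h (m + 2) (k + 1) = h * incL h (m + 1) (k + 1) + incL h m k := by
  rw [incL_eq_two_mul_incF_sub h (by omega), incL_eq_two_mul_incF_sub h (by omega),
    incL_eq_two_mul_incF_sub h hm, incF_add_two_succ h (by omega), incF_add_two_succ h hm]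
  ring

theorem sum_choose_mul_pow_of_add_two_succ {R : Type*} [CommSemiring R] (h : R)
    {G : ℕ → ℕ → R} (hG : ∀ m k, 1 ≤ m → G (m + 2) (k + 1) = h * G (m + 1) (k + 1) + G m k)
    (s : ℕ) {n : ℕ} (hn : 1 ≤ n) (l : ℕ) :
    ∑ i ∈ range (s + 1), (s.choose i : R) * G (n + i) (l + i) * h ^ i = G (n + 2 * s) (l + s) := by
  induction s generalizing n l with
  | zero => simp
  | succ s ih =>
    have hpascal := sum_choose_succ_mul (fun i _ => G (n + i) (l + i) * h ^ i) s
    simp only [← mul_assoc] at hpascal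
    rw [hpascal, ih hn]
    have hshift :
        ∑ i ∈ range (s + 1), (s.choose i : R) * G (n + (i + 1)) (l + (i + 1)) * h ^ (i + 1)
          = h * G (n + 1 + 2 * s) (l + 1 + s) := by
      rw [← ih (by omega : 1 ≤ n + 1) (l + 1), mul_sum]
      refine sum_congr rfl fun i _ => ?_
      rw [show n + (i + 1) = n + 1 + i by omega, show l + (i + 1) = l + 1 + i by omega]
      ring
    rw [hshift, show n + 2 * (s + 1) = n + 2 * s + 2 by omega,
      show l + (s + 1) = l + s + 1 by omega, hG _ _ (by omega),
      show n + 1 + 2 * s = n + 2 * s + 1 by omega,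
      show l + 1 + s = l + s + 1 by omega]
    ring

theorem incL_binomial_sum_general (h : ℝ) (s n l : ℕ) (hn : 1 ≤ n) :
    ∑ i ∈ Finset.range (s + 1), (Nat.choose s i : ℝ) * incL h (n + i) (l + i) * h ^ i =
      incL h (n + 2 * s) (l + s) :=
  sum_choose_mul_pow_of_add_two_succ h (fun _ k hm => incL_add_two_succ h hm k) s hn l

theorem incL_binomial_sum (h : ℝ) (s n l : ℕ) (hn : 1 ≤ n) (hl : l ≤ (n - s) / 2) :
    ∑ i ∈ Finset.range (s + 1), (Nat.choose s i : ℝ) * incL h (n + i) (l + i) * h ^ i =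
      incL h (n + 2 * s) (l + s) :=
  incL_binomial_sum_general h s n l hn
end

section
/- For n ≥ 2l+1 and s ≥ 1, ∑_{i=0}^{s-1} L_{h,n+i}^{l}(x)·h(x)^{s-1-i} = L_{h,n+s+1}^{l+1}(x) − h(x)^s·L_{h,n+1}^{l+1}(x). -/
open Finset

lemma coeff_rec (n i : ℕ) (hi : 2 * (i + 1) ≤ n + 1) :
    ((n + 2 : ℕ) : ℝ) / ((n + 2 - (i+1) : ℕ) : ℝ) * (Nat.choose (n + 2 - (i+1)) (i+1) : ℝ) =
      ((n + 1 : ℕ) : ℝ) / ((n + 1 - (i+1) : ℕ) : ℝ) * (Nat.choose (n + 1 - (i+1)) (i+1) : ℝ) +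
        ((n : ℕ) : ℝ) / ((n - i : ℕ) : ℝ) * (Nat.choose (n - i) i : ℝ) := by
  have hin : 2 * i + 1 ≤ n := by omega
  have h1 : n + 2 - (i+1) = n + 1 - i := by omega
  have h2 : n + 1 - (i+1) = n - i := by omega
  rw [h1, h2]
  have hpascal : Nat.choose (n + 1 - i) (i+1) = Nat.choose (n - i) (i+1) + Nat.choose (n - i) i := by
    have h3 : n + 1 - i = (n - i) + 1 := by omega
    rw [h3, Nat.choose_succ_succ', Nat.add_comm]
  have hkey : (Nat.choose (n - i) (i+1)) * (i+1) = Nat.choose (n - i) i * (n - 2*i) := by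
    have := Nat.choose_succ_right_eq (n - i) i
    have h3 : n - i - i = n - 2*i := by omega
    rw [h3] at this; exact this
  have hkeyR : ((Nat.choose (n - i) (i+1) : ℝ)) * ((i:ℝ)+1) = (Nat.choose (n - i) i : ℝ) * ((n:ℝ) - 2*i) := by
    have := congrArg (Nat.cast (R := ℝ)) hkey
    push_cast [Nat.cast_sub (by omega : 2*i ≤ n)] at this
    linarith [this]
  have c1 : ((n + 1 - i : ℕ) : ℝ) = (n:ℝ) + 1 - i := by
    push_cast [Nat.cast_sub (by omega : i ≤ n + 1)]; ring
  have c2 : ((n - i : ℕ) : ℝ) = (n:ℝ) - i := by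
    push_cast [Nat.cast_sub (by omega : i ≤ n)]; ring
  have hiR : (i:ℝ) + 1 ≤ n := by exact_mod_cast (by omega : i + 1 ≤ n)
  have d1 : (n:ℝ) + 1 - i ≠ 0 := by linarith
  have d2 : (n:ℝ) - i ≠ 0 := by linarith
  rw [c1, c2, hpascal]
  push_cast
  field_simp
  linear_combination -hkeyR

lemma incL_rec (h : ℝ) (n l : ℕ) (hn : 2 * l + 1 ≤ n) :
    incL h (n + 2) (l + 1) = h * incL h (n + 1) (l + 1) + incL h n l := by
  unfold incL
  rw [Finset.mul_sum]
  rw [Finset.sum_range_succ' (fun i => ((n + 2 : ℕ) : ℝ) / ((n + 2 - i : ℕ) : ℝ) *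
      (Nat.choose (n + 2 - i) i : ℝ) * h ^ (n + 2 - 2 * i)) (l + 1)]
  rw [Finset.sum_range_succ' (fun i => h * (((n + 1 : ℕ) : ℝ) / ((n + 1 - i : ℕ) : ℝ) *
      (Nat.choose (n + 1 - i) i : ℝ) * h ^ (n + 1 - 2 * i))) (l + 1)]
  have h0 : ((n + 2 : ℕ) : ℝ) / ((n + 2 - 0 : ℕ) : ℝ) * (Nat.choose (n + 2 - 0) 0 : ℝ) *
        h ^ (n + 2 - 2 * 0) =
      h * (((n + 1 : ℕ) : ℝ) / ((n + 1 - 0 : ℕ) : ℝ) * (Nat.choose (n + 1 - 0) 0 : ℝ) *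
        h ^ (n + 1 - 2 * 0)) := by
    simp only [Nat.sub_zero, Nat.choose_zero_right, Nat.cast_one, Nat.mul_zero]
    have e1 : ((n + 2 : ℕ) : ℝ) ≠ 0 := by positivity
    have e2 : ((n + 1 : ℕ) : ℝ) ≠ 0 := by positivity
    rw [div_self e1, div_self e2]
    rw [show n + 2 = (n + 1) + 1 from rfl, pow_succ]
    ring
  rw [h0]
  have hsum : ∑ k ∈ Finset.range (l + 1), ((n + 2 : ℕ) : ℝ) / ((n + 2 - (k+1) : ℕ) : ℝ) *
        (Nat.choose (n + 2 - (k+1)) (k+1) : ℝ) * h ^ (n + 2 - 2 * (k+1)) =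
      ∑ k ∈ Finset.range (l + 1), (h * (((n + 1 : ℕ) : ℝ) / ((n + 1 - (k+1) : ℕ) : ℝ) *
        (Nat.choose (n + 1 - (k+1)) (k+1) : ℝ) * h ^ (n + 1 - 2 * (k+1))) +
        ((n : ℕ) : ℝ) / ((n - k : ℕ) : ℝ) * (Nat.choose (n - k) k : ℝ) * h ^ (n - 2 * k)) := by
    apply Finset.sum_congr rfl
    intro k hk
    rw [Finset.mem_range] at hk
    have hk2 : 2 * (k + 1) ≤ n + 1 := by omega
    have e1 : n + 2 - 2 * (k + 1) = n - 2 * k := by omega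
    have e3 : h ^ (n - 2 * k) = h * h ^ (n + 1 - 2 * (k + 1)) := by
      rw [show n - 2 * k = (n + 1 - 2 * (k + 1)) + 1 from by omega, pow_succ]; ring
    rw [e1, coeff_rec n k hk2, e3]
    ring
  rw [hsum, Finset.sum_add_distrib]
  push_cast
  ring

theorem incL_telescoping_sum (h : ℝ) (n l s : ℕ) (hn : 2 * l + 1 ≤ n) (hs : 1 ≤ s) :
    ∑ i ∈ Finset.range s, incL h (n + i) l * h ^ (s - 1 - i) =
      incL h (n + s + 1) (l + 1) - h ^ s * incL h (n + 1) (l + 1) := by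
  induction s, hs using Nat.le_induction with
  | base =>
    simp only [Finset.sum_range_one, Nat.add_zero, Nat.sub_self, pow_zero, mul_one]
    have := incL_rec h n l hn
    rw [show n + 1 + 1 = n + 2 from rfl, this]
    ring
  | succ s hs ih =>
    rw [Finset.sum_range_succ]
    have hshift : ∑ i ∈ Finset.range s, incL h (n + i) l * h ^ (s + 1 - 1 - i) =
        h * ∑ i ∈ Finset.range s, incL h (n + i) l * h ^ (s - 1 - i) := by
      rw [Finset.mul_sum]
      apply Finset.sum_congr rfl
      intro i hi
      rw [Finset.mem_range] at hi
      rw [show s + 1 - 1 - i = (s - 1 - i) + 1 from by omega, pow_succ]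
      ring
    rw [hshift, ih]
    have hrec := incL_rec h (n + s) l (by omega)
    rw [show n + (s + 1) + 1 = n + s + 2 from by ring, hrec]
    rw [show s + 1 - 1 - s = 0 from by omega, pow_zero, pow_succ]
    ring
end

section
/- For all n ≥ 1, ∑_{i=0}^{⌊n/2⌋} i·(n/(n-i))·C(n-i, i)·h^{n-2i} = (n/2)·(L_{h,n} − h·F_{h,n}). -/
/-!
Since `i * C(n-i, i) = (n-i) * C(n-i-1, i-1)`, the `i`-th summand is `n * C(n-1-i, i-1) * h^(n-2i)`,
so the sum is `n` times the combinatorial expansion `F_{h,n-1} = ∑_j C(n-2-j, j) h^(n-2-2j)`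
(the `h`-analogue of `fib (n+1) = ∑_{a+b=n} C(a, b)`). On the other side
`L_{h,n} = F_{h,n+1} + F_{h,n-1}`, whence `L_{h,n} - h F_{h,n} = 2 F_{h,n-1}`.
-/

open Finset

theorem mul_choose_succ_mul_pow {R : Type*} [CommSemiring R] (h : R) (a b : ℕ) :
    h * ((a.choose (b + 1) : R) * h ^ (a - (b + 1))) = a.choose (b + 1) * h ^ (a - b) := by
  rcases lt_or_ge b a with hba | hab
  · rw [show a - b = a - (b + 1) + 1 by omega, pow_succ]
    ring
  · simp [Nat.choose_eq_zero_of_lt (Nat.lt_succ_of_le hab)]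

theorem Fh_succ_eq_sum_antidiagonal (h : ℝ) :
    ∀ n, Fh h (n + 1) = ∑ p ∈ antidiagonal n, (p.1.choose p.2 : ℝ) * h ^ (p.1 - p.2) :=
  Nat.twoStepInduction (by simp [Fh]) (by simp [Fh, Nat.sum_antidiagonal_succ]) fun n ih₁ ih₂ => by
    rw [show Fh h (n + 2 + 1) = h * Fh h (n + 2) + Fh h (n + 1) from rfl, ih₁, ih₂,
      Nat.sum_antidiagonal_succ (n := n + 1), Nat.sum_antidiagonal_succ' (n := n),
      Nat.sum_antidiagonal_succ' (n := n), mul_add, mul_sum]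
    simp only [mul_choose_succ_mul_pow, Nat.choose_succ_succ, Nat.cast_add, add_mul,
      Nat.add_sub_add_right, sum_add_distrib, Nat.choose_zero_right, Nat.choose_zero_succ,
      Nat.cast_one, Nat.cast_zero, one_mul, zero_mul, tsub_zero]
    ring

theorem Fh_eq_sum_choose (h : ℝ) (n : ℕ) :
    Fh h n = ∑ i ∈ range ((n + 1) / 2), ((n - 1 - i).choose i : ℝ) * h ^ (n - 1 - 2 * i) := by
  rcases n with _ | m
  · simp [Fh]
  rw [Fh_succ_eq_sum_antidiagonal, ← Nat.sum_antidiagonal_swap,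
    Nat.sum_antidiagonal_eq_sum_range_succ_mk]
  symm
  refine sum_subset (range_subset_range.2 (by omega)) (fun i _ hi => ?_) |>.trans
    (sum_congr rfl fun i hi => ?_)
  · rw [mem_range, not_lt] at hi
    simp [Nat.choose_eq_zero_of_lt (show m - i < i by omega)]
  · simp only [Prod.fst_swap, Prod.snd_swap]
    rw [show m - i - i = m + 1 - 1 - 2 * i by omega, Nat.add_sub_cancel]

theorem Lh_succ_eq_Fh_add_Fh (h : ℝ) : ∀ n, Lh h (n + 1) = Fh h (n + 2) + Fh h n :=
  Nat.twoStepInduction (by simp [Lh, Fh]) (by simp [Lh, Fh]; ring) fun n ih₁ ih₂ => by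
    have hL : Lh h (n + 3) = h * Lh h (n + 2) + Lh h (n + 1) := rfl
    have hF : Fh h (n + 4) = h * Fh h (n + 3) + Fh h (n + 2) := rfl
    have hF' : Fh h (n + 2) = h * Fh h (n + 1) + Fh h n := rfl
    linear_combination hL + h * ih₂ + ih₁ - hF - hF'

theorem succ_mul_div_mul_choose {K : Type*} [Field K] [CharZero K] {m j : ℕ} (hj : j < m)
    (c : K) :
    ((j + 1 : ℕ) : K) * (c / ((m - j : ℕ) : K)) * ((m - j).choose (j + 1) : K) =
      c * ((m - 1 - j).choose j : K) := by
  have hchoose : (j + 1) * (m - j).choose (j + 1) = (m - j) * (m - 1 - j).choose j := by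
    have := Nat.add_one_mul_choose_eq (m - 1 - j) j
    rw [show m - 1 - j + 1 = m - j by omega] at this
    rw [this, mul_comm]
  have hmj : ((m - j : ℕ) : K) ≠ 0 := Nat.cast_ne_zero.2 (by omega)
  rw [mul_right_comm, ← Nat.cast_mul, hchoose, Nat.cast_mul]
  field_simp

theorem weighted_sum_incL (h : ℝ) (n : ℕ) (hn : 1 ≤ n) :
    ∑ i ∈ Finset.range (n / 2 + 1),
        (i : ℝ) * ((n : ℝ) / ((n - i : ℕ) : ℝ)) * (Nat.choose (n - i) i : ℝ) * h ^ (n - 2 * i) =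
      ((n : ℝ) / 2) * (Lh h n - h * Fh h n) := by
  obtain ⟨m, rfl⟩ := Nat.exists_eq_add_of_le' hn
  have hL : Lh h (m + 1) - h * Fh h (m + 1) = 2 * Fh h m := by
    rw [Lh_succ_eq_Fh_add_Fh, show Fh h (m + 2) = h * Fh h (m + 1) + Fh h m from rfl]
    ring
  rw [hL, show ((m + 1 : ℕ) : ℝ) / 2 * (2 * Fh h m) = (m + 1 : ℕ) * Fh h m by ring,
    Fh_eq_sum_choose, mul_sum, sum_range_succ', Nat.cast_zero, zero_mul, zero_mul, zero_mul,
    add_zero]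
  refine sum_congr rfl fun i hi => ?_
  rw [mem_range] at hi
  rw [Nat.add_sub_add_right, show m + 1 - 2 * (i + 1) = m - 1 - 2 * i by omega,
    succ_mul_div_mul_choose (by omega), mul_assoc]
end

section
/- For n ≥ 1 even, ∑_{l=0}^{⌊n/2⌋} L_{h,n}^{l} = L_{h,n} + (n·h/2)·F_{h,n}; for n odd, ∑_{l=0}^{⌊n/2⌋} L_{h,n}^{l} = (1/2)·(L_{h,n} + n·h·F_{h,n}). -/
open Finset

lemma step_aux (h : ℝ) (n : ℕ) :
    (∑ i ∈ Finset.range (n/2+2), ((n+2-i).choose i : ℝ) * h^(n+2-2*i))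
    = h * (∑ i ∈ Finset.range ((n+1)/2+1), ((n+1-i).choose i : ℝ) * h^(n+1-2*i))
      + ∑ i ∈ Finset.range (n/2+1), ((n-i).choose i : ℝ) * h^(n-2*i) := by
  have L1 : (∑ i ∈ Finset.range (n/2+2), ((n+2-i).choose i : ℝ) * h^(n+2-2*i))
      = ∑ j ∈ Finset.range (n/2+1), (((n-j).choose j : ℝ) * h^(n-2*j)
          + ((n-j).choose (j+1) : ℝ) * h^(n-2*j)) + h^(n+2) := by
    rw [Finset.sum_range_succ' _ (n/2+1)]
    congr 1
    · apply Finset.sum_congr rfl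
      intro j hj
      simp only [Finset.mem_range] at hj
      have h1 : n+2-(j+1) = (n-j)+1 := by omega
      have h2 : n+2-2*(j+1) = n-2*j := by omega
      rw [h1, h2, Nat.choose_succ_succ]
      push_cast
      ring
    · simp
  have L2 : h * (∑ i ∈ Finset.range ((n+1)/2+1), ((n+1-i).choose i : ℝ) * h^(n+1-2*i))
      = ∑ j ∈ Finset.range ((n+1)/2), ((n-j).choose (j+1) : ℝ) * h^(n-2*j) + h^(n+2) := by
    rw [Finset.mul_sum, Finset.sum_range_succ']
    congr 1
    · apply Finset.sum_congr rfl
      intro j hj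
      simp only [Finset.mem_range] at hj
      have h1 : n+1-(j+1) = n-j := by omega
      have h2 : n+1-2*(j+1) = n-1-2*j := by omega
      have h3 : n-2*j = (n-1-2*j)+1 := by omega
      rw [h1, h2, h3, pow_succ]
      ring
    · norm_num
      ring
  have L3 : ∑ j ∈ Finset.range (n/2+1), ((n-j).choose (j+1) : ℝ) * h^(n-2*j)
      = ∑ j ∈ Finset.range ((n+1)/2), ((n-j).choose (j+1) : ℝ) * h^(n-2*j) := by
    rcases Nat.even_or_odd n with he | ho
    · have hr : n/2+1 = (n+1)/2 + 1 := by
        obtain ⟨k, hk⟩ := he; omega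
      rw [hr, Finset.sum_range_succ]
      have h0 : ((n - (n+1)/2).choose ((n+1)/2+1)) = 0 := by
        apply Nat.choose_eq_zero_of_lt
        obtain ⟨k, hk⟩ := he; omega
      rw [h0]; simp
    · have hr : n/2+1 = (n+1)/2 := by
        obtain ⟨k, hk⟩ := ho; omega
      rw [hr]
  rw [L1, Finset.sum_add_distrib, L2, L3]
  ring

lemma Fh_closed (h : ℝ) (n : ℕ) :
    Fh h (n+1) = ∑ i ∈ Finset.range (n/2+1), ((n-i).choose i : ℝ) * h^(n-2*i) := by
  have H : ∀ k : ℕ,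
      (Fh h (k+1) = ∑ i ∈ Finset.range (k/2+1), ((k-i).choose i : ℝ) * h^(k-2*i)) ∧
      (Fh h (k+2) = ∑ i ∈ Finset.range ((k+1)/2+1), ((k+1-i).choose i : ℝ) * h^(k+1-2*i)) := by
    intro k
    induction k with
    | zero => constructor <;> simp [Fh]
    | succ k ih =>
      refine ⟨ih.2, ?_⟩
      have hrec : Fh h (k+3) = h * Fh h (k+2) + Fh h (k+1) := rfl
      have hr : (k+1+1)/2+1 = k/2+2 := by omega
      rw [show k+1+2 = k+3 from rfl, hrec, ih.1, ih.2, hr]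
      rw [show (∑ i ∈ Finset.range (k/2+2), ((k+1+1-i).choose i : ℝ) * h^(k+1+1-2*i))
        = ∑ i ∈ Finset.range (k/2+2), ((k+2-i).choose i : ℝ) * h^(k+2-2*i) from rfl]
      exact (step_aux h k).symm
  exact (H n).1

lemma Lh_closed (h : ℝ) (n : ℕ) : Lh h (n+1) = Fh h (n+2) + Fh h n := by
  have H : ∀ k : ℕ, (Lh h (k+1) = Fh h (k+2) + Fh h k) ∧
      (Lh h (k+2) = Fh h (k+3) + Fh h (k+1)) := by
    intro k
    induction k with
    | zero => constructor <;> (simp [Fh, Lh]; try ring)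
    | succ k ih =>
      refine ⟨ih.2, ?_⟩
      show h * Lh h (k+2) + Lh h (k+1) = Fh h (k+4) + Fh h (k+2)
      rw [ih.1, ih.2, show Fh h (k+4) = h * Fh h (k+3) + Fh h (k+2) from rfl,
          show Fh h (k+2) = h * Fh h (k+1) + Fh h k from rfl]
      ring
  exact (H n).1

lemma swapsum (f : ℕ → ℝ) (m : ℕ) :
    ∑ l ∈ Finset.range (m+1), ∑ i ∈ Finset.range (l+1), f i
      = ∑ i ∈ Finset.range (m+1), ((m+1-i : ℕ):ℝ) * f i := by
  induction m with
  | zero => simp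
  | succ m ih =>
    rw [Finset.sum_range_succ, ih, Finset.sum_range_succ (fun i => ((m+1+1-i : ℕ):ℝ) * f i) (m+1)]
    have h1 : ∑ i ∈ Finset.range (m+1), ((m+1+1-i : ℕ):ℝ) * f i
        = ∑ i ∈ Finset.range (m+1), (((m+1-i : ℕ):ℝ) * f i + f i) := by
      apply Finset.sum_congr rfl
      intro i hi
      simp only [Finset.mem_range] at hi
      have : (m+1+1-i : ℕ) = (m+1-i) + 1 := by omega
      rw [this]
      push_cast
      ring
    rw [h1, Finset.sum_add_distrib, Finset.sum_range_succ f (m+1)]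
    norm_num
    ring

lemma nat_key (n i : ℕ) (h1 : 1 ≤ i) (h2 : 2*i ≤ n) :
    (n - i) * ((n-1-i).choose (i-1)) = (n-i).choose i * i := by
  have e1 : n - i = (n-i-1)+1 := by omega
  have e3 : n - 1 - i = n - i - 1 := by omega
  have e2 : i = (i-1)+1 := by omega
  rw [e3]
  calc (n-i) * ((n-i-1).choose (i-1)) = ((n-i-1)+1) * ((n-i-1).choose (i-1)) := by rw [← e1]
    _ = ((n-i-1)+1).choose ((i-1)+1) * ((i-1)+1) := Nat.add_one_mul_choose_eq _ _
    _ = (n-i).choose i * i := by rw [← e1, ← e2]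

lemma coeff1 (n i : ℕ) (h1 : 1 ≤ i) (h2 : 2*i ≤ n) :
    (n:ℝ) / ((n-i:ℕ):ℝ) * ((n-i).choose i : ℝ)
      = ((n-i).choose i : ℝ) + ((n-1-i).choose (i-1) : ℝ) := by
  have hne : ((n-i:ℕ):ℝ) ≠ 0 := by
    have : 0 < n - i := by omega
    positivity
  have e : ((n-i:ℕ):ℝ) * ((n-1-i).choose (i-1) : ℝ) = ((n-i).choose i : ℝ) * i := by
    exact_mod_cast congrArg (Nat.cast : ℕ → ℝ) (nat_key n i h1 h2)
  have hni : ((n-i:ℕ):ℝ) = (n:ℝ) - (i:ℝ) := by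
    push_cast [Nat.cast_sub (by omega : i ≤ n)]; ring
  field_simp
  rw [hni] at e ⊢
  linear_combination -e

lemma coeff2 (n i : ℕ) (h1 : 1 ≤ i) (h2 : 2*i ≤ n) :
    (i:ℝ) * ((n:ℝ) / ((n-i:ℕ):ℝ) * ((n-i).choose i : ℝ))
      = (n:ℝ) * ((n-1-i).choose (i-1) : ℝ) := by
  have hne : ((n-i:ℕ):ℝ) ≠ 0 := by
    have : 0 < n - i := by omega
    positivity
  have e : ((n-i:ℕ):ℝ) * ((n-1-i).choose (i-1) : ℝ) = ((n-i).choose i : ℝ) * i := by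
    exact_mod_cast congrArg (Nat.cast : ℕ → ℝ) (nat_key n i h1 h2)
  field_simp
  linear_combination -(n:ℝ) * e

theorem sum_incL (h : ℝ) (n : ℕ) (hn : 1 ≤ n) :
    (Even n → ∑ l ∈ Finset.range (n / 2 + 1), incL h n l =
        Lh h n + ((n : ℝ) * h / 2) * Fh h n) ∧
    (Odd n → ∑ l ∈ Finset.range (n / 2 + 1), incL h n l =
        (1 / 2) * (Lh h n + (n : ℝ) * h * Fh h n)) := by
  have hswap : ∑ l ∈ Finset.range (n/2+1), incL h n l
      = ∑ i ∈ Finset.range (n/2+1), ((n/2+1-i : ℕ):ℝ) *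
          ((n:ℝ) / ((n-i:ℕ):ℝ) * ((n-i).choose i : ℝ) * h^(n-2*i)) := by
    simp only [incL]
    exact swapsum _ _
  have hFnm : Fh h (n-1) = ∑ j ∈ Finset.range (n/2), ((n-2-j).choose j : ℝ) * h^(n-2-2*j) := by
    rcases Nat.lt_or_ge n 2 with hl | hg
    · have hn1 : n = 1 := by omega
      subst hn1
      simp [Fh]
    · have h2 : n - 1 = (n-2)+1 := by omega
      have h3 : (n-2)/2+1 = n/2 := by omega
      rw [h2, Fh_closed, h3]
  have hshift : ∑ i ∈ Finset.range (n/2+1),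
        (if i = 0 then 0 else ((n-1-i).choose (i-1) : ℝ) * h^(n-2*i))
      = ∑ j ∈ Finset.range (n/2), ((n-2-j).choose j : ℝ) * h^(n-2-2*j) := by
    rw [Finset.sum_range_succ']
    simp only [Nat.succ_ne_zero, if_neg, if_pos, add_zero, reduceIte]
    apply Finset.sum_congr rfl
    intro j hj
    have e1 : n-1-(j+1) = n-2-j := by omega
    have e3 : n-2*(j+1) = n-2-2*j := by omega
    rw [e1, e3, Nat.add_sub_cancel]
  have hsuma : ∑ i ∈ Finset.range (n/2+1),
        ((n:ℝ) / ((n-i:ℕ):ℝ) * ((n-i).choose i : ℝ) * h^(n-2*i))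
      = Fh h (n+1) + Fh h (n-1) := by
    have key : ∑ i ∈ Finset.range (n/2+1),
          ((n:ℝ) / ((n-i:ℕ):ℝ) * ((n-i).choose i : ℝ) * h^(n-2*i))
        = ∑ i ∈ Finset.range (n/2+1), (((n-i).choose i : ℝ) * h^(n-2*i)
            + (if i = 0 then 0 else ((n-1-i).choose (i-1) : ℝ) * h^(n-2*i))) := by
      apply Finset.sum_congr rfl
      intro i hi
      simp only [Finset.mem_range] at hi
      by_cases h0 : i = 0
      · subst h0
        rw [if_pos rfl, add_zero, Nat.sub_zero]
        rw [div_self (by exact_mod_cast (by omega : n ≠ 0) : (n:ℝ) ≠ 0), one_mul]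
      · rw [if_neg h0, coeff1 n i (by omega) (by omega)]
        ring
    rw [key, Finset.sum_add_distrib, hshift, ← hFnm, ← Fh_closed h n]
  have hsumia : ∑ i ∈ Finset.range (n/2+1),
        ((i:ℝ) * ((n:ℝ) / ((n-i:ℕ):ℝ) * ((n-i).choose i : ℝ) * h^(n-2*i)))
      = (n:ℝ) * Fh h (n-1) := by
    have key : ∑ i ∈ Finset.range (n/2+1),
          ((i:ℝ) * ((n:ℝ) / ((n-i:ℕ):ℝ) * ((n-i).choose i : ℝ) * h^(n-2*i)))
        = ∑ i ∈ Finset.range (n/2+1),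
            (n:ℝ) * (if i = 0 then 0 else ((n-1-i).choose (i-1) : ℝ) * h^(n-2*i)) := by
      apply Finset.sum_congr rfl
      intro i hi
      simp only [Finset.mem_range] at hi
      by_cases h0 : i = 0
      · subst h0; simp
      · rw [if_neg h0]
        calc (i:ℝ) * ((n:ℝ) / ((n-i:ℕ):ℝ) * ((n-i).choose i : ℝ) * h^(n-2*i))
            = ((i:ℝ) * ((n:ℝ) / ((n-i:ℕ):ℝ) * ((n-i).choose i : ℝ))) * h^(n-2*i) := by ring
          _ = ((n:ℝ) * ((n-1-i).choose (i-1) : ℝ)) * h^(n-2*i) := by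
              rw [coeff2 n i (by omega) (by omega)]
          _ = (n:ℝ) * (((n-1-i).choose (i-1) : ℝ) * h^(n-2*i)) := by ring
    rw [key, ← Finset.mul_sum, hshift, ← hFnm]
  have total : ∑ l ∈ Finset.range (n/2+1), incL h n l
      = (((n/2 : ℕ):ℝ) + 1) * (Fh h (n+1) + Fh h (n-1)) - (n:ℝ) * Fh h (n-1) := by
    rw [hswap]
    have key : ∀ i ∈ Finset.range (n/2+1),
        ((n/2+1-i : ℕ):ℝ) * ((n:ℝ) / ((n-i:ℕ):ℝ) * ((n-i).choose i : ℝ) * h^(n-2*i))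
        = (((n/2 : ℕ):ℝ) + 1) * ((n:ℝ) / ((n-i:ℕ):ℝ) * ((n-i).choose i : ℝ) * h^(n-2*i))
          - (i:ℝ) * ((n:ℝ) / ((n-i:ℕ):ℝ) * ((n-i).choose i : ℝ) * h^(n-2*i)) := by
      intro i hi
      simp only [Finset.mem_range] at hi
      have : ((n/2+1-i : ℕ):ℝ) = ((n/2 : ℕ):ℝ) + 1 - (i:ℝ) := by
        rw [Nat.cast_sub (by omega)]
        push_cast
        ring
      rw [this]
      ring
    rw [Finset.sum_congr rfl key, Finset.sum_sub_distrib, ← Finset.mul_sum, hsuma, hsumia]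
  have hLn : Lh h n = Fh h (n+1) + Fh h (n-1) := by
    cases n with
    | zero => omega
    | succ k =>
      simp only [Nat.add_sub_cancel]
      exact Lh_closed h k
  have hrec : Fh h (n+1) = h * Fh h n + Fh h (n-1) := by
    cases n with
    | zero => omega
    | succ k =>
      simp only [Nat.add_sub_cancel]
      rfl
  constructor
  · intro he
    obtain ⟨t, ht⟩ := he
    have hm : n/2 = t := by omega
    have hnr : (n:ℝ) = 2 * ((n/2:ℕ):ℝ) := by
      rw [hm]; rw [ht]; push_cast; ring
    rw [total, hLn, hrec, hnr]
    ring
  · intro ho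
    obtain ⟨t, ht⟩ := ho
    have hm : n/2 = t := by omega
    have hnr : (n:ℝ) = 2 * ((n/2:ℕ):ℝ) + 1 := by
      rw [hm]; rw [ht]; push_cast; ring
    rw [total, hLn, hrec, hnr]
    ring
end

section
/- For a fixed l ≥ 0, the generating function ∑_{n≥0} F_{h,n}^{l}·t^n equals t^{2l+1}·[F_{h,2l+1} + (F_{h,2l+2} − h·F_{h,2l+1})·t − t²/(1−h·t)^{l+1}] / (1 − h·t − t²), as an identity of formal power series (or for real t in a neighborhood of 0), where F_{h,n}^{l} is interpreted as 0 for n < 2l+1. -/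
open Finset

/-!
Write `T n i = C(n-1-i, i) h^(n-1-2i)` for the terms of `incF h n l`. Pascal's rule gives
`T (k+3) (i+1) = h T (k+2) (i+1) + T (k+1) i`, so the incomplete sums satisfy the Fibonacci
recurrence up to the error term `T (k+1) l`, which vanishes for `k < 2l` and equals
`C(l+m, l) h^m` at `k = 2l+m`. Hence `incF h n l = F_{h,n}` for `1 ≤ n ≤ 2l+2`, and multiplying
the shifted generating function by `1 - h t - t²` leaves
`F_{h,2l+1} + (F_{h,2l+2} - h F_{h,2l+1}) t - t² ∑ C(l+m, l) (h t)^m`,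
where the last series is `(1 - h t)^{-(l+1)}`, the rescaling of `(1 - t)^{-(l+1)}`.
-/

open PowerSeries

noncomputable def fibTerm (h : ℝ) (n i : ℕ) : ℝ :=
  (Nat.choose (n - 1 - i) i : ℝ) * h ^ (n - 1 - 2 * i)

lemma incF_eq_sum_fibTerm (h : ℝ) (n l : ℕ) :
    incF h n l = ∑ i ∈ range (l + 1), fibTerm h n i := rfl

lemma fibTerm_succ_zero (h : ℝ) (k : ℕ) : fibTerm h (k + 1) 0 = h ^ k := by
  simp [fibTerm]

lemma fibTerm_eq_zero_of_lt (h : ℝ) {k i : ℕ} (hk : k < 2 * i) : fibTerm h (k + 1) i = 0 := by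
  simp [fibTerm, Nat.choose_eq_zero_of_lt (by omega : k - i < i)]

lemma fibTerm_two_mul_add_succ (h : ℝ) (m i : ℕ) :
    fibTerm h (2 * i + m + 1) i = h ^ m * ((i + m).choose i : ℝ) := by
  rw [fibTerm, show 2 * i + m + 1 - 1 - i = i + m by omega,
    show 2 * i + m + 1 - 1 - 2 * i = m by omega, mul_comm]

lemma fibTerm_add_three_succ (h : ℝ) (k i : ℕ) :
    fibTerm h (k + 3) (i + 1) = h * fibTerm h (k + 2) (i + 1) + fibTerm h (k + 1) i := by
  rcases lt_trichotomy k (2 * i) with hk | rfl | hk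
  · rw [fibTerm_eq_zero_of_lt h (by omega : k + 2 < 2 * (i + 1)),
      fibTerm_eq_zero_of_lt h (by omega : k + 1 < 2 * (i + 1)), fibTerm_eq_zero_of_lt h hk]
    ring
  · rw [fibTerm_eq_zero_of_lt h (by omega : 2 * i + 1 < 2 * (i + 1))]
    simp [fibTerm, show 2 * i + 2 - (i + 1) = i + 1 by omega, show 2 * i - i = i by omega,
      show 2 * i + 2 - 2 * (i + 1) = 0 by omega]
  · obtain ⟨j, rfl⟩ : ∃ j, k = 2 * i + j + 1 := ⟨k - (2 * i + 1), by omega⟩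
    simp only [fibTerm, show 2 * i + j + 1 + 3 - 1 - (i + 1) = (i + j + 1) + 1 by omega,
      show 2 * i + j + 1 + 2 - 1 - (i + 1) = i + j + 1 by omega,
      show 2 * i + j + 1 + 1 - 1 - i = i + j + 1 by omega,
      show 2 * i + j + 1 + 3 - 1 - 2 * (i + 1) = j + 1 by omega,
      show 2 * i + j + 1 + 2 - 1 - 2 * (i + 1) = j by omega,
      show 2 * i + j + 1 + 1 - 1 - 2 * i = j + 1 by omega, Nat.choose_succ_succ', Nat.cast_add]
    ring

lemma incF_add_three (h : ℝ) (k l : ℕ) :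
    incF h (k + 3) l + fibTerm h (k + 1) l = h * incF h (k + 2) l + incF h (k + 1) l := by
  simp only [incF_eq_sum_fibTerm, sum_range_succ' (fibTerm h (k + 3)),
    sum_range_succ' (fibTerm h (k + 2)), sum_range_succ (fibTerm h (k + 1)),
    fibTerm_add_three_succ, sum_add_distrib, ← mul_sum, fibTerm_succ_zero]
  ring

lemma incF_two_mul_add_succ_recurrence (h : ℝ) (l m : ℕ) :
    incF h (2 * l + 1 + (m + 2)) l + h ^ m * ((l + m).choose l : ℝ) =
      h * incF h (2 * l + 1 + (m + 1)) l + incF h (2 * l + 1 + m) l := by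
  have hrec := incF_add_three h (2 * l + m) l
  rwa [fibTerm_two_mul_add_succ, show 2 * l + m + 3 = 2 * l + 1 + (m + 2) by omega,
    show 2 * l + m + 2 = 2 * l + 1 + (m + 1) by omega,
    show 2 * l + m + 1 = 2 * l + 1 + m by omega] at hrec

lemma incF_one (h : ℝ) (l : ℕ) : incF h 1 l = 1 := by
  simp [incF_eq_sum_fibTerm, sum_range_succ', fibTerm, Nat.choose_zero_succ]

lemma incF_two (h : ℝ) (l : ℕ) : incF h 2 l = h := by
  rcases l with _ | l
  · simp [incF_eq_sum_fibTerm, fibTerm]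
  · simp [incF_eq_sum_fibTerm, sum_range_succ', fibTerm, Nat.choose_zero_succ]

lemma incF_eq_Fh {h : ℝ} {l : ℕ} :
    ∀ {n : ℕ}, 1 ≤ n → n ≤ 2 * l + 2 → incF h n l = Fh h n
  | 1, _, _ => incF_one h l
  | 2, _, _ => by simp [incF_two, Fh]
  | k + 3, _, hk => by
    have hrec := incF_add_three h k l
    rwa [fibTerm_eq_zero_of_lt h (by omega), add_zero,
      incF_eq_Fh (n := k + 2) (by omega) (by omega),
      incF_eq_Fh (n := k + 1) (by omega) (by omega)] at hrec

lemma inv_one_sub_C_mul_X_pow {k : Type*} [Field k] (a : k) (d : ℕ) :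
    ((1 - C a * X) ^ (d + 1))⁻¹ = PowerSeries.mk fun n => a ^ n * ((d + n).choose d : k) := by
  refine (inv_eq_iff_mul_eq_one (by simp)).mpr ?_
  have := congrArg (rescale a) (mk_add_choose_mul_one_sub_pow_eq_one (S := k) d)
  simpa [rescale_mk, rescale_X] using this

lemma mk_ite_lt_eq_X_pow_mul {R : Type*} [Semiring R] (k : ℕ) (f : ℕ → R) :
    (PowerSeries.mk fun n => if n < k then 0 else f n) =
      X ^ k * PowerSeries.mk fun s => f (k + s) := by
  ext n
  rw [coeff_X_pow_mul', coeff_mk, coeff_mk]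
  split_ifs <;> first | rfl | omega | congr 1; omega

lemma mk_mul_one_sub_C_mul_X_sub_X_sq {R : Type*} [CommRing R] (a : R) {b r : ℕ → R}
    (hb : ∀ m, b (m + 2) + r m = a * b (m + 1) + b m) :
    PowerSeries.mk b * (1 - C a * X - X ^ 2) =
      C (b 0) + C (b 1 - a * b 0) * X - X ^ 2 * PowerSeries.mk r := by
  have hL : PowerSeries.mk b * (1 - C a * X - X ^ 2) =
      PowerSeries.mk b - C a * (PowerSeries.mk b * X ^ 1) - PowerSeries.mk b * X ^ 2 := by ring
  ext n
  rcases n with _ | _ | m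
  · simp
  · simp [hL, coeff_mul_X_pow', coeff_X_pow_mul']
  · simp only [hL, pow_one, map_sub, coeff_mk, coeff_C_mul, coeff_succ_mul_X, coeff_mul_X_pow',
      coeff_X_pow_mul', le_add_iff_nonneg_left, zero_le, ↓reduceIte, Nat.reduceSubDiff, map_mul,
      map_add, coeff_succ_C, coeff_mul_C, zero_mul, sub_self, add_zero, zero_sub]
    linear_combination hb m

open PowerSeries in
theorem incF_generating_function (h : ℝ) (l : ℕ) :
    (PowerSeries.mk fun n => if n < 2 * l + 1 then 0 else incF h n l) =
      (X : PowerSeries ℝ) ^ (2 * l + 1) *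
        (C (Fh h (2 * l + 1)) + C (Fh h (2 * l + 2) - h * Fh h (2 * l + 1)) * X -
          X ^ 2 * ((1 - C h * X) ^ (l + 1))⁻¹) *
        (1 - C h * X - X ^ 2)⁻¹ := by
  rw [inv_one_sub_C_mul_X_pow, eq_mul_inv_iff_mul_eq (by simp), mk_ite_lt_eq_X_pow_mul, mul_assoc,
    mk_mul_one_sub_C_mul_X_sub_X_sq h (incF_two_mul_add_succ_recurrence h l), add_zero,
    incF_eq_Fh (by omega) (by omega), incF_eq_Fh (by omega) (by omega)]
end
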